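/- arXiv:1601.07398 — 9 statements merged into one kernel-verified Lean document; each statement's English description precedes it below -/
import Mathlib

section
/- Let Γ be a finite abelian group and let S and T be disjoint symmetric subsets of Γ. If H_S(t) and H_T(t) are the transition matrices of Cay(Γ, S) and Cay(Γ, T), respectively, then for every t ∈ ℝ the transition matrix of Cay(Γ, S ∪ T) equals H_S(t)·H_T(t). -/
open Matrix Complex

/-- Adjacency matrix of the Cayley graph `Cay(Γ, S)`: `a, b` adjacent iff `a - b ∈ S`. -/
noncomputable def cayAdj {G : Type*} [AddGroup G] (S : Set G) : Matrix G G ℂ :=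
  Matrix.of fun a b => S.indicator (fun _ => (1 : ℂ)) (a - b)

/-- Transition matrix `H(t) = exp(i t A)` of a graph with adjacency matrix `A`. -/
noncomputable def transitionM {V : Type*} [Fintype V] [DecidableEq V]
    (A : Matrix V V ℂ) (t : ℝ) : Matrix V V ℂ :=
  NormedSpace.exp ((Complex.I * (t : ℂ)) • A)

/-! Adjacency matrices of Cayley graphs on a common abelian group commute, and the adjacency
matrix of `Cay(Γ, S ∪ T)` is the sum of those of `Cay(Γ, S)` and `Cay(Γ, T)` when `S` and `T`
are disjoint; the exponential of a sum of commuting matrices is the product of the exponentials. -/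

lemma transitionM_add_of_commute {V : Type*} [Fintype V] [DecidableEq V]
    {A B : Matrix V V ℂ} (h : Commute A B) (t : ℝ) :
    transitionM (A + B) t = transitionM A t * transitionM B t := by
  rw [transitionM, smul_add]
  exact Matrix.exp_add_of_commute _ _ ((h.smul_left _).smul_right _)

lemma cayAdj_union_of_disjoint {G : Type*} [AddGroup G] {S T : Set G} (hST : Disjoint S T) :
    cayAdj (S ∪ T) = cayAdj S + cayAdj T := by
  ext a b
  simp only [cayAdj, Matrix.of_apply, Matrix.add_apply, Set.indicator_union_of_disjoint hST]

lemma cayAdj_commute {Γ : Type*} [AddCommGroup Γ] [Fintype Γ] (S T : Set Γ) :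
    Commute (cayAdj S) (cayAdj T) := by
  ext a b
  simp only [Matrix.mul_apply, cayAdj, Matrix.of_apply]
  -- reflect the intermediate vertex: `c ↦ a + b - c` swaps the steps `a - c` and `c - b`
  refine Fintype.sum_equiv (Equiv.subLeft (a + b)) _ _ fun c => ?_
  rw [Equiv.subLeft_apply, show a - (a + b - c) = c - b by abel,
    show a + b - c - b = a - c by abel, mul_comm]

theorem transition_union_general {Γ : Type*} [AddCommGroup Γ] [Fintype Γ] [DecidableEq Γ]
    (S T : Set Γ) (hST : Disjoint S T) (t : ℝ) :
    transitionM (cayAdj (S ∪ T)) t = transitionM (cayAdj S) t * transitionM (cayAdj T) t := by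
  rw [cayAdj_union_of_disjoint hST]
  exact transitionM_add_of_commute (cayAdj_commute S T) t

/-- Let `Γ` be a finite abelian group and `S`, `T` disjoint symmetric subsets
of `Γ`.  Then for every `t ∈ ℝ`, the transition matrix of `Cay(Γ, S ∪ T)` equals
`H_S(t) * H_T(t)`. -/
theorem transition_union {Γ : Type*} [AddCommGroup Γ] [Fintype Γ] [DecidableEq Γ]
    (S T : Set Γ) (hST : Disjoint S T)
    (hS : ∀ s ∈ S, -s ∈ S) (hT : ∀ s ∈ T, -s ∈ T) (t : ℝ) :
    transitionM (cayAdj (S ∪ T)) t = transitionM (cayAdj S) t * transitionM (cayAdj T) t :=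
  transition_union_general S T hST t
end

section
/- Let X(C) be the cubelike graph with connection set C ⊆ ℤ₂ⁿ, let σ be the sum of the elements of C, and let H(t) be the transition matrix of X(C). Then H(π/2) = i^{|C|} · P_σ. -/
/-!
The adjacency matrix of `X(C)` is `∑ c ∈ C, P_c`, a sum of pairwise commuting permutation
matrices with `P_c * P_c = 1`. For an involution `P`, splitting the exponential series into even
and odd terms gives `exp (i θ P) = cos θ • 1 + (i sin θ) • P`, so `exp (i π/2 P_c) = i P_c`.
Since the `P_c` commute, `H(π/2)` is the product of the `i P_c`, which is `i^|C| P_σ`.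
-/

open Matrix Complex

/-- Adjacency matrix of the cubelike graph `X(C)` over `ℤ₂ⁿ`:
`x, y` adjacent iff `x + y ∈ C`. -/
noncomputable def cubeAdj {n : ℕ} (C : Set (Fin n → ZMod 2)) :
    Matrix (Fin n → ZMod 2) (Fin n → ZMod 2) ℂ :=
  Matrix.of fun x y => C.indicator (fun _ => (1 : ℂ)) (x + y)

/-- `P_u`: the permutation matrix of the translation `x ↦ x + u`. -/
def permMatrix {V : Type*} [AddGroup V] [DecidableEq V] (u : V) : Matrix V V ℂ :=
  Matrix.of fun x y => if y = x + u then 1 else 0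

open scoped Nat

section Involution

variable {A : Type*} [Ring A] [Algebra ℂ A] [TopologicalSpace A] [IsTopologicalRing A]
  [ContinuousSMul ℂ A] [T2Space A]

theorem exp_I_mul_smul_of_mul_self_eq_one {P : A} (hP : P * P = 1) (θ : ℂ) :
    NormedSpace.exp ((I * θ) • P) = cos θ • (1 : A) + (I * sin θ) • P := by
  have hpow_even (k : ℕ) : P ^ (2 * k) = 1 := by rw [pow_mul, sq, hP, one_pow]
  set term : ℕ → A := fun n => (n ! : ℂ)⁻¹ • ((I * θ) • P) ^ n with term_def
  have hterm (n : ℕ) : term n = ((θ * I) ^ n / n !) • P ^ n := by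
    simp only [term_def, smul_pow, smul_smul, mul_comm I, inv_mul_eq_div]
  have heven : HasSum (fun k => term (2 * k)) (cos θ • 1) := by
    simpa only [hterm, hpow_even] using (hasSum_cos' θ).smul_const (1 : A)
  have hodd : HasSum (fun k => term (2 * k + 1)) ((I * sin θ) • P) := by
    simp only [hterm, pow_succ P, hpow_even, one_mul]
    convert ((hasSum_sin' θ).mul_left I).smul_const P using 2
    field_simp
  rw [NormedSpace.exp_eq_tsum ℂ]
  exact (heven.even_add_odd hodd).tsum_eq

theorem exp_I_mul_pi_div_two_smul_of_mul_self_eq_one {P : A} (hP : P * P = 1) :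
    NormedSpace.exp ((I * ((Real.pi / 2 : ℝ) : ℂ)) • P) = I • P := by
  simp [exp_I_mul_smul_of_mul_self_eq_one hP]

end Involution

section PermMatrix

variable {V : Type*} [DecidableEq V]

theorem permMatrix_zero [AddGroup V] : permMatrix (0 : V) = 1 := by
  ext x y
  simp [permMatrix, one_apply, eq_comm]

theorem permMatrix_add [AddGroup V] [Fintype V] (u v : V) :
    permMatrix (u + v) = permMatrix u * permMatrix v := by
  ext x y
  rw [mul_apply, Finset.sum_eq_single (x + u)]
  · simp [permMatrix, add_assoc]
  · intro z _ hz
    simp [permMatrix, hz]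
  · simp

theorem permMatrix_commute [AddCommGroup V] [Fintype V] (u v : V) :
    Commute (permMatrix u) (permMatrix v) := by
  rw [Commute, SemiconjBy, ← permMatrix_add, ← permMatrix_add, add_comm]

variable [AddCommGroup V] [Module (ZMod 2) V] [Fintype V]

theorem permMatrix_mul_self (u : V) : permMatrix u * permMatrix u = 1 := by
  rw [← permMatrix_add, ZModModule.add_self, permMatrix_zero]

theorem exp_I_mul_pi_div_two_smul_sum_permMatrix (s : Finset V) :
    NormedSpace.exp ((I * ((Real.pi / 2 : ℝ) : ℂ)) • ∑ c ∈ s, permMatrix c) =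
      I ^ s.card • permMatrix (∑ c ∈ s, c) := by
  induction s using Finset.induction with
  | empty => simp [permMatrix_zero]
  | @insert a s ha ih =>
    have hcomm : Commute ((I * ((Real.pi / 2 : ℝ) : ℂ)) • permMatrix a)
        ((I * ((Real.pi / 2 : ℝ) : ℂ)) • ∑ c ∈ s, permMatrix c) :=
      ((Commute.sum_right _ _ _ fun c _ => permMatrix_commute a c).smul_right _).smul_left _
    rw [Finset.sum_insert ha, smul_add, Matrix.exp_add_of_commute _ _ hcomm, ih,
      exp_I_mul_pi_div_two_smul_of_mul_self_eq_one (permMatrix_mul_self a), smul_mul_smul,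
      ← permMatrix_add, Finset.card_insert_of_notMem ha, Finset.sum_insert ha, pow_succ']

end PermMatrix

theorem cubeAdj_eq_sum_permMatrix {n : ℕ} (C : Finset (Fin n → ZMod 2)) :
    cubeAdj (↑C : Set (Fin n → ZMod 2)) = ∑ c ∈ C, permMatrix c := by
  ext x y
  have hy (c : Fin n → ZMod 2) : y = x + c ↔ c = x + y := by
    rw [eq_comm, ← sub_eq_iff_eq_add', sub_eq_add_neg, ZModModule.neg_eq_self, add_comm]
  simp [cubeAdj, permMatrix, Matrix.sum_apply, hy, Set.indicator_apply]

/-- Let `X(C)` be the cubelike graph with connection set `C ⊆ ℤ₂ⁿ`, let `σ` be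
the sum of the elements of `C`, and let `H(t)` be the transition matrix of `X(C)`.
Then `H(π/2) = i^{|C|} • P_σ`. -/
theorem transition_cubelike_pi_div_two {n : ℕ} (C : Finset (Fin n → ZMod 2)) :
    transitionM (cubeAdj (↑C : Set (Fin n → ZMod 2))) (Real.pi / 2) =
      (Complex.I ^ C.card) • permMatrix (∑ u ∈ C, u) := by
  rw [transitionM, cubeAdj_eq_sum_permMatrix, exp_I_mul_pi_div_two_smul_sum_permMatrix]
end

section
/- Let G and H be graphs with adjacency matrices A and B, and let B = ∑_{s=1}^{q} μ_s F_s be the spectral decomposition of B (the μ_s are the distinct eigenvalues of B and the F_s the corresponding orthogonal spectral projections, with ∑_s F_s = I). If H_G(t) = exp(itA) is the transition matrix of G, then the transition matrix of the Kronecker product G × H satisfies H_{G×H}(t) = ∑_{s=1}^{q} H_G(μ_s t) ⊗ F_s for every t ∈ ℝ. -/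
/-!
Because the `F s` are orthogonal idempotents summing to `1`, the map `X ↦ ∑ s, X s ⊗ F s` is a
continuous ring homomorphism from `Fin q → Matrix U U ℂ` to `Matrix (U × V) (U × V) ℂ`, so it
commutes with the exponential, which on the product ring is taken componentwise. The spectral
decomposition writes `itA ⊗ B` as the image of `s ↦ iμ_s t A`.
-/

open Matrix Complex

open scoped Kronecker

namespace Matrix

variable {ι l m n p R : Type*}

theorem kronecker_sum [Semiring R] (A : Matrix l m R) (s : Finset ι) (B : ι → Matrix n p R) :
    A ⊗ₖ (∑ i ∈ s, B i) = ∑ i ∈ s, A ⊗ₖ B i :=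
  map_sum (kroneckerBilinear (R := ℕ) A) B s

variable [Fintype ι] [Fintype m] [DecidableEq m] [Fintype n] [DecidableEq n]

def kroneckerIdempotentsRingHom [CommRing R] {F : ι → Matrix n n R}
    (hF : CompleteOrthogonalIdempotents F) : (ι → Matrix m m R) →+* Matrix (m × n) (m × n) R where
  toFun X := ∑ i, X i ⊗ₖ F i
  map_one' := by simp only [Pi.one_apply, ← kronecker_sum, hF.complete, one_kronecker_one]
  map_mul' X Y := by
    classical
    simp [Finset.sum_mul, Finset.mul_sum, ← mul_kronecker_mul, hF.mul_eq, apply_ite]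
  map_zero' := by simp
  map_add' X Y := by simp [add_kronecker, Finset.sum_add_distrib]

-- The operator norm is only a device to apply `NormedSpace.map_exp`; the completeness of the
-- matrix space for its uniformity has to be supplied by hand.
open scoped Norms.Operator in
theorem exp_sum_kronecker [NormedCommRing R] [NormedAlgebra ℚ R] [CompleteSpace R]
    {F : ι → Matrix n n R} (hF : CompleteOrthogonalIdempotents F) (X : ι → Matrix m m R) :
    NormedSpace.exp (∑ i, X i ⊗ₖ F i) = ∑ i, NormedSpace.exp (X i) ⊗ₖ F i := by
  have hcont : Continuous (kroneckerIdempotentsRingHom (m := m) hF) :=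
    continuous_finsetSum _ fun i _ => continuous_matrix fun _ _ =>
      ((continuous_apply i).matrix_elem _ _).mul continuous_const
  have : @CompleteSpace (Matrix m m R) PseudoMetricSpace.toUniformSpace :=
    Matrix.instCompleteSpace m m R
  have hmap := NormedSpace.map_exp (kroneckerIdempotentsRingHom hF) hcont X
  rw [Pi.exp_def] at hmap
  exact hmap.symm

end Matrix

theorem transitionM_kronecker {U V ι : Type*} [Fintype U] [DecidableEq U] [Fintype V]
    [DecidableEq V] [Fintype ι] (A : Matrix U U ℂ) {B : Matrix V V ℂ} {μ : ι → ℝ}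
    {F : ι → Matrix V V ℂ} (hF : CompleteOrthogonalIdempotents F)
    (hB : B = ∑ s, (μ s : ℂ) • F s) (t : ℝ) :
    transitionM (A ⊗ₖ B) t = ∑ s, transitionM A (μ s * t) ⊗ₖ F s := by
  have hsplit : (I * t) • (A ⊗ₖ B) = ∑ s, ((I * ↑(μ s * t)) • A) ⊗ₖ F s := by
    rw [hB, kronecker_sum, Finset.smul_sum]
    refine Finset.sum_congr rfl fun s _ => ?_
    rw [kronecker_smul, smul_kronecker, smul_smul]
    congr 1
    push_cast
    ring
  simp only [transitionM]
  rw [hsplit, exp_sum_kronecker hF]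

theorem transition_kronecker_general {U V : Type*} [Fintype U] [DecidableEq U]
    [Fintype V] [DecidableEq V]
    (G : SimpleGraph U) [DecidableRel G.Adj] (H : SimpleGraph V) [DecidableRel H.Adj]
    {q : ℕ} (μ : Fin q → ℝ) (F : Fin q → Matrix V V ℂ)
    (hdecomp : H.adjMatrix ℂ = ∑ s, (μ s : ℂ) • F s)
    (hsum : ∑ s, F s = 1)
    (horth : ∀ s t, F s * F t = if s = t then F s else 0)
    (t : ℝ) :
    transitionM (Matrix.kroneckerMap (· * ·) (G.adjMatrix ℂ) (H.adjMatrix ℂ)) t =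
      ∑ s, Matrix.kroneckerMap (· * ·) (transitionM (G.adjMatrix ℂ) (μ s * t)) (F s) :=
  transitionM_kronecker _ ⟨OrthogonalIdempotents.iff_mul_eq.mpr horth, hsum⟩ hdecomp t

/-- Let `G` and `H` be graphs with adjacency matrices `A` and `B`, and let
`B = ∑_{s=1}^{q} μ_s F_s` be the spectral decomposition of `B` (the `μ_s` distinct real
eigenvalues, the `F_s` the corresponding orthogonal spectral projections with `∑ F_s = I`).
If `H_G(t) = exp(itA)` is the transition matrix of `G`, then the transition matrix of the
Kronecker product `G × H` satisfies `H_{G×H}(t) = ∑ H_G(μ_s t) ⊗ F_s` for every `t ∈ ℝ`. -/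
theorem transition_kronecker {U V : Type*} [Fintype U] [DecidableEq U]
    [Fintype V] [DecidableEq V]
    (G : SimpleGraph U) [DecidableRel G.Adj] (H : SimpleGraph V) [DecidableRel H.Adj]
    {q : ℕ} (μ : Fin q → ℝ) (F : Fin q → Matrix V V ℂ)
    (hdistinct : Function.Injective μ)
    (hdecomp : H.adjMatrix ℂ = ∑ s, (μ s : ℂ) • F s)
    (hsum : ∑ s, F s = 1)
    (hproj : ∀ s, (F s).conjTranspose = F s)
    (horth : ∀ s t, F s * F t = if s = t then F s else 0)
    (t : ℝ) :
    transitionM (Matrix.kroneckerMap (· * ·) (G.adjMatrix ℂ) (H.adjMatrix ℂ)) t =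
      ∑ s, Matrix.kroneckerMap (· * ·) (transitionM (G.adjMatrix ℂ) (μ s * t)) (F s) :=
  transition_kronecker_general G H μ F hdecomp hsum horth t
end

section
/- Let X(C) be a cubelike graph with connection set C ⊆ ℤ₂ⁿ such that the sum of the elements of C is 0 and |C| ≡ 0 (mod 4). Then for every graph G all of whose adjacency eigenvalues are integers, the transition matrix of the Kronecker product X(C) × G at time π/2 is the identity matrix. -/
open Matrix Complex

/-!
The characters `χ_a x = (-1) ^ (a ⬝ᵥ x)` of `ℤ₂ⁿ` form the rows of the Walsh–Hadamard matrix,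
which diagonalises `X(C)` with eigenvalues `λ_a = ∑_{c ∈ C} χ_a c = |C| - 2 #{c ∈ C | a ⬝ᵥ c = 1}`.
That count is congruent to `a ⬝ᵥ ∑_{c ∈ C} c = 0` modulo 2, so `4 ∣ λ_a`. A Kronecker product of
diagonalisable matrices is diagonalised by the Kronecker product of the eigenbases, so the
eigenvalues of `X(C) × G` are the products `λ_a μ ∈ 4ℤ`, and `exp (i π/2 · 4k) = 1`.
-/

open Kronecker

section Diagonalizable

variable {ι : Type*} [Fintype ι] [DecidableEq ι]

def IsIntDiagonalizable (m : ℤ) (M : Matrix ι ι ℂ) : Prop :=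
  ∃ P : Matrix ι ι ℂ, IsUnit P ∧ ∃ d : ι → ℤ, (∀ i, m ∣ d i) ∧
    M = P * diagonal (fun i => (d i : ℂ)) * P⁻¹

theorem IsIntDiagonalizable.kronecker {κ : Type*} [Fintype κ] [DecidableEq κ] {m k : ℤ}
    {A : Matrix ι ι ℂ} {B : Matrix κ κ ℂ} (hA : IsIntDiagonalizable m A)
    (hB : IsIntDiagonalizable k B) : IsIntDiagonalizable (m * k) (A ⊗ₖ B) := by
  obtain ⟨P, hP, d, hd, rfl⟩ := hA
  obtain ⟨Q, hQ, e, he, rfl⟩ := hB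
  refine ⟨P ⊗ₖ Q, hP.kronecker hQ, fun p => d p.1 * e p.2,
    fun p => mul_dvd_mul (hd p.1) (he p.2), ?_⟩
  rw [inv_kronecker, mul_kronecker_mul, mul_kronecker_mul, diagonal_kronecker_diagonal]
  push_cast
  rfl

theorem Matrix.IsHermitian.isIntDiagonalizable_one_of_spectrum_int {B : Matrix ι ι ℂ}
    (hB : B.IsHermitian) (hint : ∀ μ ∈ spectrum ℂ B, ∃ k : ℤ, μ = (k : ℂ)) :
    IsIntDiagonalizable 1 B := by
  have hk (i : ι) : ∃ k : ℤ, (hB.eigenvalues i : ℂ) = k :=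
    hint _ (spectrum.algebraMap_mem ℂ (hB.eigenvalues_mem_spectrum_real i))
  choose d hd using hk
  set U := hB.eigenvectorUnitary
  have hUinv : (U : Matrix ι ι ℂ)⁻¹ = star (U : Matrix ι ι ℂ) :=
    inv_eq_left_inv (Unitary.coe_star_mul_self U)
  have hdiag : diagonal (fun i => (d i : ℂ)) = diagonal (RCLike.ofReal ∘ hB.eigenvalues) := by
    congr 1
    ext i
    exact (hd i).symm
  refine ⟨U, (Unitary.toUnits U).isUnit, d, fun _ => one_dvd _, ?_⟩
  rw [hUinv, hdiag]
  simpa using hB.spectral_theorem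

theorem IsIntDiagonalizable.transitionM_pi_div_two {M : Matrix ι ι ℂ}
    (hM : IsIntDiagonalizable 4 M) : transitionM M (Real.pi / 2) = 1 := by
  obtain ⟨P, hP, d, hd, rfl⟩ := hM
  have hexp : NormedSpace.exp ((I * ↑(Real.pi / 2)) • fun i => (d i : ℂ)) = 1 := by
    funext i
    obtain ⟨k, hk⟩ := hd i
    rw [Pi.coe_exp, ← Complex.exp_eq_exp_ℂ, Pi.smul_apply, smul_eq_mul, Pi.one_apply,
      Complex.exp_eq_one_iff]
    exact ⟨k, by push_cast [hk]; ring⟩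
  rw [transitionM, ← smul_mul_assoc, ← mul_smul_comm, ← diagonal_smul, Matrix.exp_conj _ _ hP,
    Matrix.exp_diagonal, hexp, diagonal_one', mul_one,
    mul_nonsing_inv _ ((isUnit_iff_isUnit_det P).mp hP)]

end Diagonalizable

theorem neg_one_pow_val_add {R : Type*} [Ring R] (u v : ZMod 2) :
    (-1 : R) ^ (u + v).val = (-1) ^ u.val * (-1) ^ v.val := by
  rw [← pow_add, ZMod.val_add, ← neg_one_pow_eq_pow_mod_two]

theorem neg_one_pow_val_eq_one_sub_two_mul (z : ZMod 2) :
    (-1 : ℤ) ^ z.val = 1 - 2 * z.val := by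
  fin_cases z <;> rfl

section WalshHadamard

variable {ι : Type*} [Fintype ι]

def signChar (a : ι → ZMod 2) : AddChar (ι → ZMod 2) ℂ where
  toFun x := (-1) ^ (a ⬝ᵥ x).val
  map_zero_eq_one' := by simp
  map_add_eq_mul' x y := by rw [dotProduct_add, neg_one_pow_val_add]

theorem signChar_apply (a x : ι → ZMod 2) : signChar a x = (-1) ^ (a ⬝ᵥ x).val := rfl

theorem signChar_comm (a x : ι → ZMod 2) : signChar a x = signChar x a := by
  rw [signChar_apply, signChar_apply, dotProduct_comm]

theorem signChar_add_left (a b x : ι → ZMod 2) :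
    signChar (a + b) x = signChar a x * signChar b x := by
  rw [signChar_comm, AddChar.map_add_eq_mul, signChar_comm, signChar_comm x]

variable (ι) in
def walshHadamard : Matrix (ι → ZMod 2) (ι → ZMod 2) ℂ := of fun a x => signChar a x

theorem walshHadamard_apply (a x : ι → ZMod 2) : walshHadamard ι a x = signChar a x := rfl

variable [DecidableEq ι]

theorem signChar_eq_zero_iff {a : ι → ZMod 2} : signChar a = 0 ↔ a = 0 := by
  refine ⟨fun h => funext fun i => ?_, fun h => ?_⟩
  · have hi := DFunLike.congr_fun h (Pi.single i 1)
    rw [signChar_apply, dotProduct_single, mul_one, AddChar.zero_apply] at hi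
    revert hi
    generalize a i = z
    fin_cases z
    · exact fun _ => rfl
    · norm_num [ZMod.val]
  · ext x
    simp [signChar_apply, h]

theorem sum_signChar (a : ι → ZMod 2) :
    ∑ x, signChar a x = if a = 0 then (2 : ℂ) ^ Fintype.card ι else 0 := by
  rw [AddChar.sum_eq_ite]
  simp [signChar_eq_zero_iff]

theorem walshHadamard_mul_self :
    walshHadamard ι * walshHadamard ι = (2 ^ Fintype.card ι : ℂ) • 1 := by
  ext a b
  have hab : a + b = 0 ↔ a = b := by rw [add_eq_zero_iff_eq_neg, ZModModule.neg_eq_self]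
  simp only [mul_apply, walshHadamard_apply, signChar_comm _ b, ← signChar_add_left,
    sum_signChar, hab, Matrix.smul_apply, one_apply, smul_eq_mul, mul_ite, mul_one, mul_zero]

theorem isUnit_walshHadamard : IsUnit (walshHadamard ι) := by
  have hinv : walshHadamard ι * ((2 ^ Fintype.card ι : ℂ)⁻¹ • walshHadamard ι) = 1 := by
    rw [mul_smul_comm, walshHadamard_mul_self, smul_smul,
      inv_mul_cancel₀ (pow_ne_zero _ two_ne_zero), one_smul]
  exact (isUnit_iff_isUnit_det _).mpr (isUnit_det_of_right_inverse hinv)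

end WalshHadamard

section Cubelike

variable {n : ℕ}

def cubeEigenvalue (C : Finset (Fin n → ZMod 2)) (a : Fin n → ZMod 2) : ℤ :=
  ∑ c ∈ C, (-1) ^ (a ⬝ᵥ c).val

theorem cast_cubeEigenvalue (C : Finset (Fin n → ZMod 2)) (a : Fin n → ZMod 2) :
    (cubeEigenvalue C a : ℂ) = ∑ c ∈ C, signChar a c := by
  simp [cubeEigenvalue, signChar_apply]

theorem walshHadamard_mul_cubeAdj (C : Finset (Fin n → ZMod 2)) :
    walshHadamard (Fin n) * cubeAdj (C : Set (Fin n → ZMod 2)) =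
      diagonal (fun a => (cubeEigenvalue C a : ℂ)) * walshHadamard (Fin n) := by
  ext a y
  rw [mul_apply, diagonal_mul, cast_cubeEigenvalue]
  calc ∑ x, walshHadamard (Fin n) a x * cubeAdj (C : Set (Fin n → ZMod 2)) x y
      = ∑ c, signChar a (c + y) * (C : Set (Fin n → ZMod 2)).indicator (fun _ => 1) c :=
        (Fintype.sum_equiv (Equiv.addRight y) _ _ fun c => by
          simp [walshHadamard_apply, cubeAdj, add_assoc, ZModModule.add_self]).symm
    _ = ∑ c ∈ C, signChar a c * signChar a y := by
        simp [Set.indicator_apply, Finset.sum_ite_mem, AddChar.map_add_eq_mul]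
    _ = _ := by rw [Finset.sum_mul]; rfl

theorem four_dvd_cubeEigenvalue {C : Finset (Fin n → ZMod 2)} (hσ : ∑ u ∈ C, u = 0)
    (hcard : C.card % 4 = 0) (a : Fin n → ZMod 2) : 4 ∣ cubeEigenvalue C a := by
  have heig : cubeEigenvalue C a = C.card - 2 * ∑ c ∈ C, ((a ⬝ᵥ c).val : ℤ) := by
    simp [cubeEigenvalue, neg_one_pow_val_eq_one_sub_two_mul, Finset.sum_sub_distrib,
      Finset.mul_sum]
  have heven : 2 ∣ ∑ c ∈ C, (a ⬝ᵥ c).val := by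
    rw [← ZMod.natCast_eq_zero_iff, Nat.cast_sum]
    simp_rw [ZMod.natCast_zmod_val]
    rw [← dotProduct_sum, hσ, dotProduct_zero]
  rw [heig]
  refine dvd_sub (Int.natCast_dvd_natCast.mpr (Nat.dvd_of_mod_eq_zero hcard)) ?_
  exact_mod_cast mul_dvd_mul_left 2 heven

theorem isIntDiagonalizable_cubeAdj {C : Finset (Fin n → ZMod 2)} (hσ : ∑ u ∈ C, u = 0)
    (hcard : C.card % 4 = 0) : IsIntDiagonalizable 4 (cubeAdj (C : Set (Fin n → ZMod 2))) := by
  have hdet := (isUnit_iff_isUnit_det _).mp (isUnit_walshHadamard (ι := Fin n))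
  refine ⟨(walshHadamard (Fin n))⁻¹, isUnit_nonsing_inv_iff.mpr isUnit_walshHadamard,
    cubeEigenvalue C, four_dvd_cubeEigenvalue hσ hcard, ?_⟩
  rw [nonsing_inv_nonsing_inv _ hdet, mul_assoc, ← walshHadamard_mul_cubeAdj]
  exact (nonsing_inv_mul_cancel_left _ _ hdet).symm

end Cubelike

/-- Let `X(C)` be a cubelike graph with connection set `C ⊆ ℤ₂ⁿ` such that the
sum of the elements of `C` is `0` and `|C| ≡ 0 (mod 4)`.  Then for every graph `G` all of whose
adjacency eigenvalues are integers, the transition matrix of the Kronecker product `X(C) × G`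
at time `π/2` is the identity matrix. -/
theorem transition_cubelike_kronecker_integral {n : ℕ} (C : Finset (Fin n → ZMod 2))
    (hσ : ∑ u ∈ C, u = 0) (hcard : C.card % 4 = 0)
    {V : Type*} [Fintype V] [DecidableEq V] (G : SimpleGraph V) [DecidableRel G.Adj]
    (hint : ∀ μ ∈ spectrum ℂ (G.adjMatrix ℂ), ∃ k : ℤ, μ = (k : ℂ)) :
    transitionM
        (Matrix.kroneckerMap (· * ·) (cubeAdj (↑C : Set (Fin n → ZMod 2))) (G.adjMatrix ℂ))
        (Real.pi / 2) = 1 := by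
  have hA := isIntDiagonalizable_cubeAdj hσ hcard
  have hB := (G.isHermitian_adjMatrix ℂ).isIntDiagonalizable_one_of_spectrum_int hint
  simpa only [mul_one] using (hA.kronecker hB).transitionM_pi_div_two
end

section
/- Let n = 2^α m with α ≥ 1 and m an odd positive integer, and let d = 2^β m' be a proper divisor of n (so 0 ≤ β ≤ α and m' | m). Let C = {c = (c_0, c_1, …, c_{α-1}) ∈ ℤ₂^α : gcd(∑_{j=0}^{α-1} c_j 2^j, 2^α) = 2^β} (equivalently, c_j = 0 for all j < β and c_β = 1 when β < α, and C = {0} when β = α). Then Cay(ℤ_n, S_{ℤ_n}(d)) is isomorphic as a graph to the Kronecker product X(C) × Cay(ℤ_m, S_{ℤ_m}(m')). -/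
open Matrix Complex

/-! By the Chinese remainder theorem `ℤ_n ≅ ℤ_{2^α} × ℤ_m`, and as `m` is odd,
`gcd(z, 2^α m) = 2^β m'` holds exactly when `gcd(z, 2^α) = 2^β` and `gcd(z, m) = m'`; so the
adjacency of `Cay(ℤ_n, S(d))` is the product of a condition on the `2^α`-part and one on the
`m`-part. Writing residues modulo `2^α` in binary, the sum of the digit vectors of `a` and `b` is
the digit vector of `a xor b`, and `a xor b` and `a - b` are divisible by the same powers of two
up to `2^α` (those below the lowest digit where `a` and `b` differ), hence have the same gcd
with `2^α`. -/

theorem Nat.xor_div_two_pow_mod_two (a b j : ℕ) :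
    (a ^^^ b) / 2 ^ j % 2 = (a / 2 ^ j % 2 + b / 2 ^ j % 2) % 2 := by
  rw [← Nat.shiftRight_eq_div_pow, ← Nat.shiftRight_eq_div_pow, ← Nat.shiftRight_eq_div_pow,
    Nat.shiftRight_xor_distrib, Nat.xor_mod_two_eq, Nat.add_mod]

theorem Nat.two_pow_dvd_xor_iff (a b k : ℕ) : 2 ^ k ∣ a ^^^ b ↔ a % 2 ^ k = b % 2 ^ k := by
  have mod_xor : (a ^^^ b) % 2 ^ k = a % 2 ^ k ^^^ b % 2 ^ k :=
    Nat.eq_of_testBit_eq fun i => by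
      by_cases hi : i < k <;> simp [Nat.testBit_mod_two_pow, hi]
  rw [Nat.dvd_iff_mod_eq_zero, mod_xor, xor_eq_zero_iff]

theorem Nat.gcd_prime_pow_eq_of_forall_dvd_iff {p u v : ℕ} (hp : p.Prime) (α : ℕ)
    (h : ∀ k ≤ α, p ^ k ∣ u ↔ p ^ k ∣ v) : u.gcd (p ^ α) = v.gcd (p ^ α) := by
  have dvd_of_forall {u v : ℕ} (h : ∀ k ≤ α, p ^ k ∣ u → p ^ k ∣ v) :
      u.gcd (p ^ α) ∣ v.gcd (p ^ α) := by
    obtain ⟨s, hs, hgcd⟩ := (Nat.dvd_prime_pow hp).mp (Nat.gcd_dvd_right u (p ^ α))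
    rw [hgcd]
    exact Nat.dvd_gcd (h s hs (hgcd ▸ Nat.gcd_dvd_left u _)) (Nat.pow_dvd_pow p hs)
  exact Nat.dvd_antisymm (dvd_of_forall fun k hk => (h k hk).1)
    (dvd_of_forall fun k hk => (h k hk).2)

theorem ZMod.dvd_val_sub_iff {n d : ℕ} [NeZero n] (hd : d ∣ n) (a b : ZMod n) :
    d ∣ (a - b).val ↔ a.val ≡ b.val [MOD d] := by
  rw [← ZMod.natCast_eq_natCast_iff, ← ZMod.natCast_eq_zero_iff, ← ZMod.cast_eq_val,
    ZMod.cast_sub hd, ZMod.cast_eq_val, ZMod.cast_eq_val, sub_eq_zero]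

theorem ZMod.gcd_val_cast {n d : ℕ} [NeZero n] (z : ZMod n) :
    (z.cast : ZMod d).val.gcd d = z.val.gcd d := by
  rw [ZMod.cast_eq_val, ZMod.val_natCast, ← Nat.gcd_rec, Nat.gcd_comm]

theorem Nat.two_pow_mul_odd_inj {s t b d : ℕ} (hb : Odd b) (hd : Odd d)
    (h : 2 ^ s * b = 2 ^ t * d) : 2 ^ s = 2 ^ t ∧ b = d := by
  have hst : 2 ^ s ∣ 2 ^ t :=
    (Nat.Coprime.pow_left s (Nat.coprime_two_left.mpr hd)).dvd_of_dvd_mul_right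
      (h ▸ dvd_mul_right _ _)
  have hts : 2 ^ t ∣ 2 ^ s :=
    (Nat.Coprime.pow_left t (Nat.coprime_two_left.mpr hb)).dvd_of_dvd_mul_right
      (h ▸ dvd_mul_right _ _)
  have heq := Nat.dvd_antisymm hst hts
  exact ⟨heq, Nat.eq_of_mul_eq_mul_left (by positivity) (heq ▸ h)⟩

theorem Nat.gcd_two_pow_mul_odd_eq_iff {α m β m' : ℕ} (hm : Odd m) (hm' : m' ∣ m) (z : ℕ) :
    z.gcd (2 ^ α * m) = 2 ^ β * m' ↔ z.gcd (2 ^ α) = 2 ^ β ∧ z.gcd m = m' := by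
  obtain ⟨s, -, hs⟩ := (Nat.dvd_prime_pow Nat.prime_two).mp (Nat.gcd_dvd_right z (2 ^ α))
  rw [Nat.Coprime.gcd_mul z (Nat.Coprime.pow_left α (Nat.coprime_two_left.mpr hm)), hs]
  constructor
  · intro h
    exact Nat.two_pow_mul_odd_inj (hm.of_dvd_nat (Nat.gcd_dvd_right z m))
      (hm.of_dvd_nat hm') h
  · rintro ⟨h2, hodd⟩
    rw [h2, hodd]

theorem ZMod.val_finEquiv {n : ℕ} [NeZero n] (x : Fin n) :
    (ZMod.finEquiv n x).val = x := by
  obtain ⟨k, rfl⟩ := Nat.exists_eq_succ_of_ne_zero (NeZero.ne n)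
  rfl

theorem ZMod.val_finEquiv_symm {n : ℕ} [NeZero n] (x : ZMod n) :
    ((ZMod.finEquiv n).symm x : ℕ) = x.val := by
  rw [← ZMod.val_finEquiv, RingEquiv.apply_symm_apply]

/-- The binary digits of a residue modulo `2 ^ α`, least significant first. -/
noncomputable def binaryDigits (α : ℕ) : ZMod (2 ^ α) ≃ (Fin α → ZMod 2) :=
  (ZMod.finEquiv _).symm.toEquiv.trans <| finFunctionFinEquiv.symm.trans <|
    Equiv.piCongrRight fun _ => (ZMod.finEquiv 2).toEquiv

section binaryDigits

variable {α : ℕ}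

theorem val_binaryDigits (x : ZMod (2 ^ α)) (j : Fin α) :
    (binaryDigits α x j).val = x.val / 2 ^ (j : ℕ) % 2 := by
  simp [binaryDigits, ZMod.val_finEquiv, finFunctionFinEquiv_symm_apply_val,
    ZMod.val_finEquiv_symm]

theorem sum_val_binaryDigits (x : ZMod (2 ^ α)) :
    ∑ j : Fin α, (binaryDigits α x j).val * 2 ^ (j : ℕ) = x.val := by
  calc ∑ j : Fin α, (binaryDigits α x j).val * 2 ^ (j : ℕ)
      = ∑ j, (finFunctionFinEquiv.symm ⟨x.val, x.val_lt⟩ j : ℕ) * 2 ^ (j : ℕ) := by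
        simp only [val_binaryDigits, finFunctionFinEquiv_symm_apply_val]
    _ = x.val := by rw [← finFunctionFinEquiv_apply, Equiv.apply_symm_apply]

theorem binaryDigits_add (a b : ZMod (2 ^ α)) :
    binaryDigits α a + binaryDigits α b =
      binaryDigits α ((a.val ^^^ b.val : ℕ) : ZMod (2 ^ α)) := by
  funext j
  apply ZMod.val_injective
  rw [Pi.add_apply, ZMod.val_add, val_binaryDigits, val_binaryDigits, val_binaryDigits,
    ZMod.val_natCast, Nat.mod_eq_of_lt (Nat.xor_lt_two_pow (ZMod.val_lt a) (ZMod.val_lt b)),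
    Nat.xor_div_two_pow_mod_two]

theorem gcd_sum_binaryDigits_add (a b : ZMod (2 ^ α)) :
    (∑ j : Fin α, ((binaryDigits α a + binaryDigits α b) j).val * 2 ^ (j : ℕ)).gcd (2 ^ α) =
      (a - b).val.gcd (2 ^ α) := by
  rw [binaryDigits_add, sum_val_binaryDigits, ZMod.val_natCast,
    Nat.mod_eq_of_lt (Nat.xor_lt_two_pow (ZMod.val_lt a) (ZMod.val_lt b))]
  refine Nat.gcd_prime_pow_eq_of_forall_dvd_iff Nat.prime_two α fun k hk => ?_
  rw [Nat.two_pow_dvd_xor_iff, ZMod.dvd_val_sub_iff (Nat.pow_dvd_pow 2 hk), Nat.ModEq]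

end binaryDigits

theorem Set.indicator_one_eq_mul_of_iff {α β γ M : Type*} [MulZeroOneClass M]
    {s : Set α} {t : Set β} {u : Set γ} {a : α} {b : β} {c : γ}
    (h : a ∈ s ↔ b ∈ t ∧ c ∈ u) :
    s.indicator 1 a = t.indicator (1 : β → M) b * u.indicator 1 c := by
  classical
  simp only [Set.indicator_apply, ite_zero_mul_ite_zero, h, Pi.one_apply, mul_one]

theorem icg_iso_kronecker_cubelike_general (α m : ℕ) (hm : Odd m)
    (β m' : ℕ) (hm' : m' ∣ m) :
    ∃ e : ZMod (2 ^ α * m) ≃ (Fin α → ZMod 2) × ZMod m,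
      ∀ x y : ZMod (2 ^ α * m),
        cayAdj {z : ZMod (2 ^ α * m) | Nat.gcd z.val (2 ^ α * m) = 2 ^ β * m'} x y =
        Matrix.kroneckerMap (· * ·)
          (cubeAdj {c : Fin α → ZMod 2 |
            Nat.gcd (∑ j : Fin α, (c j).val * 2 ^ (j : ℕ)) (2 ^ α) = 2 ^ β})
          (cayAdj {z : ZMod m | Nat.gcd z.val m = m'})
          (e x) (e y) := by
  have : NeZero m := ⟨hm.pos.ne'⟩
  have hcop : (2 ^ α).Coprime m := Nat.Coprime.pow_left α (Nat.coprime_two_left.mpr hm)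
  refine ⟨(ZMod.chineseRemainder hcop).toEquiv.trans
    ((binaryDigits α).prodCongr (Equiv.refl _)), fun x y => ?_⟩
  have hcrt : ∀ z, ZMod.chineseRemainder hcop z = (z.cast, z.cast) := fun z =>
    Prod.ext (Prod.fst_zmod_cast z) (Prod.snd_zmod_cast z)
  simp only [cayAdj, cubeAdj, Matrix.of_apply, Matrix.kroneckerMap_apply,
    RingEquiv.toEquiv_eq_coe, Equiv.trans_apply, RingEquiv.coe_toEquiv, hcrt,
    Equiv.prodCongr_apply, Prod.map, Equiv.refl_apply]
  apply Set.indicator_one_eq_mul_of_iff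
  simp only [Set.mem_ofPred_eq, gcd_sum_binaryDigits_add, ← ZMod.cast_sub (dvd_mul_right _ _),
    ← ZMod.cast_sub (dvd_mul_left _ _), ZMod.gcd_val_cast]
  exact Nat.gcd_two_pow_mul_odd_eq_iff hm hm' _

/-- Let `n = 2^α * m` with `α ≥ 1` and `m` odd, and let `d = 2^β * m'` be a
proper divisor of `n` (so `β ≤ α` and `m' ∣ m`).  Let
`C = {c ∈ ℤ₂^α : gcd(∑ c_j 2^j, 2^α) = 2^β}` (with the convention `gcd(0, k) = k`).
Then `Cay(ℤ_n, S_{ℤ_n}(d))` is isomorphic, as a graph, to the Kronecker product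
`X(C) × Cay(ℤ_m, S_{ℤ_m}(m'))`. -/
theorem icg_iso_kronecker_cubelike (α m : ℕ) (hα : 1 ≤ α) (hm0 : 0 < m) (hm : Odd m)
    (β m' : ℕ) (hβ : β ≤ α) (hm' : m' ∣ m) (hproper : 2 ^ β * m' ≠ 2 ^ α * m) :
    ∃ e : ZMod (2 ^ α * m) ≃ (Fin α → ZMod 2) × ZMod m,
      ∀ x y : ZMod (2 ^ α * m),
        cayAdj {z : ZMod (2 ^ α * m) | Nat.gcd z.val (2 ^ α * m) = 2 ^ β * m'} x y =
        Matrix.kroneckerMap (· * ·)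
          (cubeAdj {c : Fin α → ZMod 2 |
            Nat.gcd (∑ j : Fin α, (c j).val * 2 ^ (j : ℕ)) (2 ^ α) = 2 ^ β})
          (cayAdj {z : ZMod m | Nat.gcd z.val m = m'})
          (e x) (e y) :=
  icg_iso_kronecker_cubelike_general α m hm β m' hm'
end

section
/- If n and d are positive integers with d | n and n/d divisible by 8, then the transition matrix of the integral circulant graph ICG_n({d}) at time π/2 is the identity matrix. -/
open Matrix Complex

/-- Adjacency matrix of the integral circulant graph `ICG_n(D)`: the Cayley graph over `ℤ_n`
with connection set `∪_{d ∈ D} S_{ℤ_n}(d)`, where `S_{ℤ_n}(d) = {x : gcd(x, n) = d}`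
(with the convention `gcd(0, n) = n`). -/
noncomputable def icgAdj (n : ℕ) (D : Set ℕ) : Matrix (ZMod n) (ZMod n) ℂ :=
  cayAdj {x : ZMod n | Nat.gcd x.val n ∈ D}

/-!
Möbius inversion over the gcd writes the indicator of `{x : gcd(x, n) = d}` as
`∑_{u ∣ n/d} μ(u) 1_{H_u}`, where `H_u ≤ ℤ_n` is generated by `d u`; hence
`A = ∑_{u ∣ n/d} μ(u) J_u` with `J_u` the adjacency matrix of `Cay(ℤ_n, H_u)`. These circulant
matrices commute, and `J_u² = |H_u| J_u`, so `J_u / |H_u|` is idempotent and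
`exp(z J_u) = 1` whenever `exp(z |H_u|) = 1`. Only squarefree `u` contribute, and for those
`8 ∣ n/d` forces `4 ∣ |H_u| = (n/d)/u`, so every factor `exp(i π/2 μ(u) J_u)` is the identity.
-/

namespace NormedSpace

variable {𝕂 𝔸 : Type*} [RCLike 𝕂] [NormedRing 𝔸] [NormedAlgebra 𝕂 𝔸] [CompleteSpace 𝔸]

theorem exp_smul_of_isIdempotentElem {e : 𝔸} (he : IsIdempotentElem e) (k : 𝕂) :
    exp (k • e) = 1 + (exp k - 1) • e := by
  have hterm : ∀ n : ℕ, ((n.factorial : 𝕂)⁻¹) • (k • e) ^ n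
      = ((n.factorial : 𝕂)⁻¹ • k ^ n) • e + if n = 0 then 1 - e else 0 := by
    rintro (_ | n)
    · simp
    · rw [smul_pow, he.pow_eq n.succ_ne_zero, smul_smul]
      simp
  have hsum := ((exp_series_hasSum_exp' (𝕂 := 𝕂) k).smul_const e).add (hasSum_ite_eq 0 (1 - e))
  rw [← funext hterm] at hsum
  rw [(exp_series_hasSum_exp' (𝕂 := 𝕂) (k • e)).unique hsum, sub_smul, one_smul]
  abel

theorem exp_smul_eq_one_of_mul_self_eq_smul {a : 𝔸} {q : 𝕂} (hq : q ≠ 0) (ha : a * a = q • a)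
    {k : 𝕂} (hk : exp (k * q) = 1) : exp (k • a) = 1 := by
  have he : IsIdempotentElem (q⁻¹ • a) := by
    rw [IsIdempotentElem, smul_mul_smul_comm, ha, smul_smul, mul_assoc, inv_mul_cancel₀ hq,
      mul_one]
  have hka : k • a = (k * q) • (q⁻¹ • a) := by
    rw [smul_smul, mul_assoc, mul_inv_cancel₀ hq, mul_one]
  rw [hka, exp_smul_of_isIdempotentElem he, hk, sub_self, zero_smul, add_zero]

end NormedSpace

theorem Matrix.exp_sum_eq_one {ι m 𝔸 : Type*} [Fintype m] [DecidableEq m] [NormedRing 𝔸]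
    [NormedAlgebra ℚ 𝔸] [CompleteSpace 𝔸] (s : Finset ι) (f : ι → Matrix m m 𝔸)
    (hcomm : ∀ i j, Commute (f i) (f j)) (hf : ∀ i ∈ s, NormedSpace.exp (f i) = 1) :
    NormedSpace.exp (∑ i ∈ s, f i) = 1 := by
  rw [Matrix.exp_sum_of_commute s f fun i _ j _ _ => hcomm i j]
  exact (Finset.noncommProd_eq_pow_card _ _ _ 1 hf).trans (one_pow _)

theorem commute_cayAdj {G : Type*} [AddCommGroup G] [Fintype G] (S T : Set G) :
    Commute (cayAdj S) (cayAdj T) :=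
  circulant_mul_comm _ _

theorem cayAdj_addSubgroup_mul_self {G : Type*} [AddGroup G] [Fintype G] (H : AddSubgroup G) :
    cayAdj (H : Set G) * cayAdj (H : Set G) = (Nat.card H : ℂ) • cayAdj (H : Set G) := by
  classical
  ext a b
  have hterm : ∀ x, cayAdj (H : Set G) a x * cayAdj (H : Set G) x b
      = cayAdj (H : Set G) a b * (H : Set G).indicator 1 (x - b) := by
    intro x
    by_cases hxb : x - b ∈ H
    · have hab : a - b ∈ H ↔ a - x ∈ H := by
        rw [← sub_add_sub_cancel a x b, H.add_mem_cancel_right hxb]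
      simp [cayAdj, Set.indicator_apply, hxb, hab]
    · simp [cayAdj, Set.indicator_apply, hxb]
  have hcard : ∑ x, (H : Set G).indicator (1 : G → ℂ) (x - b) = Nat.card H := by
    refine ((Equiv.subRight b).sum_comp ((H : Set G).indicator 1)).trans ?_
    simp [Set.indicator_apply, Finset.sum_boole, Nat.card_eq_fintype_card, Fintype.card_subtype]
  rw [mul_apply, Finset.sum_congr rfl fun x _ => hterm x, ← Finset.mul_sum, hcard,
    Matrix.smul_apply, smul_eq_mul, mul_comm]

open scoped Matrix.Norms.Operator in
theorem exp_smul_cayAdj_addSubgroup_eq_one {G : Type*} [AddGroup G] [Fintype G] [DecidableEq G]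
    (H : AddSubgroup G) {z : ℂ} (hz : Complex.exp (z * Nat.card H) = 1) :
    NormedSpace.exp (z • cayAdj (H : Set G)) = 1 :=
  NormedSpace.exp_smul_eq_one_of_mul_self_eq_smul (Nat.cast_ne_zero.2 Nat.card_pos.ne')
    (cayAdj_addSubgroup_mul_self H) (by rwa [← Complex.exp_eq_exp_ℂ])

theorem ZMod.mem_zmultiples_natCast_iff {n c : ℕ} [NeZero n] (hc : c ∣ n) (x : ZMod n) :
    x ∈ AddSubgroup.zmultiples (c : ZMod n) ↔ c ∣ x.val := by
  constructor
  · rintro ⟨k, rfl⟩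
    rw [← ZMod.natCast_eq_zero_iff, ZMod.natCast_val, ← ZMod.castHom_apply (h := hc), map_zsmul,
      map_natCast, ZMod.natCast_self, smul_zero]
  · rintro ⟨t, ht⟩
    refine ⟨t, ?_⟩
    rw [← ZMod.natCast_zmod_val x, ht]
    simp [mul_comm]

theorem ZMod.card_zmultiples_natCast {n c : ℕ} [NeZero n] (hc : c ∣ n) :
    Nat.card (AddSubgroup.zmultiples (c : ZMod n)) = n / c := by
  rw [Nat.card_zmultiples, ZMod.addOrderOf_coe _ (NeZero.ne n), Nat.gcd_eq_right hc]

open ArithmeticFunction ArithmeticFunction.Moebius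

theorem sum_divisors_moebius_ite_dvd {m : ℕ} (hm : m ≠ 0) (y : ℕ) :
    ∑ u ∈ m.divisors, (if u ∣ y then μ u else 0) = if y.Coprime m then 1 else 0 := by
  have hdiv : {u ∈ m.divisors | u ∣ y} = (y.gcd m).divisors := by
    ext u
    simp only [Finset.mem_filter, Nat.mem_divisors, Nat.dvd_gcd_iff]
    have := Nat.gcd_ne_zero_right (m := y) hm
    tauto
  rw [← Finset.sum_filter, hdiv, ← coe_mul_zeta_apply, moebius_mul_coe_zeta,
    ArithmeticFunction.one_apply]

theorem ite_gcd_eq_sum_moebius {n d : ℕ} (hn : n ≠ 0) (hdn : d ∣ n) (x : ℕ) :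
    (if x.gcd n = d then 1 else 0 : ℤ) = ∑ u ∈ (n / d).divisors, if d * u ∣ x then μ u else 0 := by
  obtain ⟨m, rfl⟩ := hdn
  have hd : d ≠ 0 := left_ne_zero_of_mul hn
  rw [Nat.mul_div_cancel_left m (Nat.pos_of_ne_zero hd)]
  by_cases hdx : d ∣ x
  · obtain ⟨y, rfl⟩ := hdx
    simp only [Nat.gcd_mul_left, Nat.mul_dvd_mul_iff_left (Nat.pos_of_ne_zero hd),
      mul_eq_left₀ hd]
    exact (sum_divisors_moebius_ite_dvd (right_ne_zero_of_mul hn) y).symm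
  · have hgcd : x.gcd (d * m) ≠ d := fun h => hdx (h ▸ Nat.gcd_dvd_left x (d * m))
    have hdux : ∀ u, ¬ d * u ∣ x := fun u h => hdx (dvd_of_mul_right_dvd h)
    simp [hgcd, hdux]

theorem icgAdj_singleton_eq_sum_moebius {n d : ℕ} [NeZero n] (hdn : d ∣ n) :
    icgAdj n {d} = ∑ u ∈ (n / d).divisors,
      (μ u : ℂ) • cayAdj (AddSubgroup.zmultiples ((d * u : ℕ) : ZMod n) : Set (ZMod n)) := by
  classical
  ext a b
  have hmem : ∀ u ∈ (n / d).divisors, ∀ x : ZMod n,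
      x ∈ AddSubgroup.zmultiples ((d * u : ℕ) : ZMod n) ↔ d * u ∣ x.val := fun u hu =>
    ZMod.mem_zmultiples_natCast_iff (Nat.mul_dvd_of_dvd_div hdn (Nat.dvd_of_mem_divisors hu))
  have hgcd := congrArg (fun k : ℤ => (k : ℂ))
    (ite_gcd_eq_sum_moebius (NeZero.ne n) hdn (a - b).val)
  push_cast at hgcd
  simp only [icgAdj, cayAdj, Matrix.sum_apply, Matrix.smul_apply, of_apply, smul_eq_mul,
    Set.indicator_apply, Set.mem_ofPred_eq, Set.mem_singleton_iff, hgcd]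
  refine Finset.sum_congr rfl fun u hu => ?_
  simp only [SetLike.mem_coe, hmem u hu, mul_ite, mul_one, mul_zero]

theorem pow_dvd_div_of_squarefree {p k m u : ℕ} (hp : p.Prime) (hm : m ≠ 0) (hpm : p ^ (k + 1) ∣ m)
    (hu : u ∣ m) (hsq : Squarefree u) : p ^ k ∣ m / u := by
  have hm_le := (hp.pow_dvd_iff_le_factorization hm).1 hpm
  have hu_le := hsq.natFactorization_le_one p
  have hmu : m / u ≠ 0 := (Nat.div_ne_zero_iff_of_dvd hu).2 ⟨hm, hsq.ne_zero⟩
  refine (hp.pow_dvd_iff_le_factorization hmu).2 ?_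
  rw [Nat.factorization_div hu, Finsupp.tsub_apply]
  omega

theorem cexp_I_mul_pi_div_two_mul_moebius_mul_div_eq_one {m u : ℕ} (h8 : 8 ∣ m)
    (hu : u ∈ m.divisors) : Complex.exp (I * (Real.pi / 2 : ℝ) * μ u * (m / u : ℕ)) = 1 := by
  by_cases hμ : μ u = 0
  · simp [hμ]
  obtain ⟨w, hw⟩ := pow_dvd_div_of_squarefree (k := 2) Nat.prime_two (Nat.mem_divisors.1 hu).2 h8
    (Nat.dvd_of_mem_divisors hu) (moebius_ne_zero_iff_squarefree.1 hμ)
  rw [hw, ← Complex.exp_int_mul_two_pi_mul_I (μ u * w)]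
  push_cast
  ring_nf

theorem icg_periodic_of_eight_dvd_general (n d : ℕ) [NeZero n] (hdn : d ∣ n)
    (h8 : 8 ∣ n / d) :
    transitionM (icgAdj n {d}) (Real.pi / 2) = 1 := by
  rw [transitionM, icgAdj_singleton_eq_sum_moebius hdn]
  simp only [Finset.smul_sum, smul_smul]
  apply Matrix.exp_sum_eq_one
  · intro u v
    exact ((commute_cayAdj _ _).smul_left _).smul_right _
  intro u hu
  refine exp_smul_cayAdj_addSubgroup_eq_one _ ?_
  rw [ZMod.card_zmultiples_natCast (Nat.mul_dvd_of_dvd_div hdn (Nat.dvd_of_mem_divisors hu)),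
    ← Nat.div_div_eq_div_mul]
  exact cexp_I_mul_pi_div_two_mul_moebius_mul_div_eq_one h8 hu

/-- If `n` and `d` are positive integers with `d ∣ n` and `8 ∣ n / d`, then
the transition matrix of the integral circulant graph `ICG_n({d})` at time `π/2` is the
identity matrix. -/
theorem icg_periodic_of_eight_dvd (n d : ℕ) [NeZero n] (hd0 : 0 < d) (hdn : d ∣ n)
    (h8 : 8 ∣ n / d) :
    transitionM (icgAdj n {d}) (Real.pi / 2) = 1 :=
  icg_periodic_of_eight_dvd_general n d hdn h8
end

section
/- If n and d are positive integers with d | n and n/d ≡ 4 (mod 8), then the transition matrix of the integral circulant graph ICG_n({d, 2d, 4d}) at time π/2 is the identity matrix. -/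
open Matrix Complex

/-!
`ICG_n(D)` is a circulant graph, so the Fourier matrix `(ζ^{-xy})` of `ℤ_n` diagonalises it, with
eigenvalues `λ_j = ∑_{x ∈ S} ζ^{xj}`. Writing `n = 4ud` with `u` odd, the connection set is
`S = {d b : gcd(b, u) = 1}`, which is invariant under translation by `ud = n/4`. Hence
`λ_j = (1 + v + v² + v³) c` with `v = ζ^{jud}` a fourth root of unity and `c` a Ramanujan sum, an
integer; so `λ_j ∈ 4ℤ` and `exp(iπ/2 · λ_j) = 1` for every eigenvalue.
-/

open Finset
open scoped ArithmeticFunction.Moebius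

theorem geom_sum_eq_ite_of_pow_eq_one {K : Type*} [Field K] [DecidableEq K] {v : K} {N : ℕ}
    (hv : v ^ N = 1) : ∑ i ∈ range N, v ^ i = if v = 1 then (N : K) else 0 := by
  split_ifs with h
  · simp [h]
  · rw [geom_sum_eq h, hv, sub_self, zero_div]

theorem sum_range_mul_filter_dvd {M : Type*} [AddCommMonoid M] (f : ℕ → M) {d : ℕ} (hd : 0 < d)
    (m : ℕ) : ∑ a ∈ range (d * m) with d ∣ a, f a = ∑ b ∈ range m, f (d * b) := by
  rw [← sum_image fun _ _ _ _ h => Nat.eq_of_mul_eq_mul_left hd h]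
  congr 1
  ext a
  simp only [mem_filter, mem_range, mem_image]
  constructor
  · rintro ⟨ha, b, rfl⟩
    exact ⟨b, Nat.lt_of_mul_lt_mul_left ha, rfl⟩
  · rintro ⟨b, hb, rfl⟩
    exact ⟨Nat.mul_lt_mul_of_pos_left hb hd, dvd_mul_right d b⟩

theorem sum_range_mul_eq_geom_sum_mul {R : Type*} [CommSemiring R] {f : ℕ → R} {u : ℕ} {c : R}
    (hf : ∀ b, f (u + b) = c * f b) (k : ℕ) :
    ∑ b ∈ range (k * u), f b = (∑ i ∈ range k, c ^ i) * ∑ r ∈ range u, f r := by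
  induction k with
  | zero => simp
  | succ k ih =>
    rw [Nat.succ_mul, add_comm, sum_range_add, geom_sum_succ]
    simp only [hf, ← mul_sum, ih]
    ring

/-- The sum is the Ramanujan sum `c_u`; Möbius inversion over `gcd r u` turns it into an integer
combination of geometric sums over `u`-th roots of unity. -/
theorem exists_int_sum_coprime_pow_eq {u : ℕ} {z : ℂ} (hz : z ^ u = 1) :
    ∃ c : ℤ, ∑ r ∈ range u with r.Coprime u, z ^ r = c := by
  rcases u.eq_zero_or_pos with rfl | hu
  · exact ⟨0, by simp⟩
  refine ⟨∑ δ ∈ u.divisors, μ δ * if z ^ δ = 1 then ((u / δ : ℕ) : ℤ) else 0, ?_⟩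
  have coprime_eq_sum_moebius : ∀ r, (if r.Coprime u then (1 : ℂ) else 0) =
      ∑ δ ∈ u.divisors with δ ∣ r, (μ δ : ℂ) := by
    intro r
    have hdiv : {δ ∈ u.divisors | δ ∣ r} = (r.gcd u).divisors := by
      rw [← Nat.divisors_filter_dvd_of_dvd hu.ne' (Nat.gcd_dvd_right r u)]
      refine filter_congr fun δ hδ => ?_
      rw [Nat.dvd_gcd_iff, and_iff_left (Nat.dvd_of_mem_divisors hδ)]
    rw [hdiv, ← Int.cast_sum, ← ArithmeticFunction.coe_mul_zeta_apply,
      ArithmeticFunction.moebius_mul_coe_zeta, ArithmeticFunction.one_apply]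
    split_ifs <;> simp_all [Nat.Coprime]
  calc ∑ r ∈ range u with r.Coprime u, z ^ r
      = ∑ r ∈ range u, ∑ δ ∈ u.divisors with δ ∣ r, (μ δ : ℂ) * z ^ r := by
        rw [sum_filter]
        refine sum_congr rfl fun r _ => ?_
        rw [← sum_mul, ← coprime_eq_sum_moebius]
        split_ifs <;> simp
    _ = ∑ δ ∈ u.divisors, (μ δ : ℂ) * ∑ r ∈ range u with δ ∣ r, z ^ r := by
        simp_rw [sum_filter, mul_sum, mul_ite, mul_zero]
        exact sum_comm
    _ = ∑ δ ∈ u.divisors, (μ δ : ℂ) * ∑ s ∈ range (u / δ), (z ^ δ) ^ s := by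
        refine sum_congr rfl fun δ hδ => ?_
        have hδu := Nat.dvd_of_mem_divisors hδ
        conv_lhs => rw [← Nat.mul_div_cancel' hδu]
        rw [sum_range_mul_filter_dvd _ (Nat.pos_of_dvd_of_pos hδu hu)]
        simp_rw [pow_mul]
    _ = _ := by
        rw [Int.cast_sum]
        refine sum_congr rfl fun δ hδ => ?_
        rw [geom_sum_eq_ite_of_pow_eq_one, Int.cast_mul]
        · split_ifs <;> simp only [Int.cast_natCast, Int.cast_zero]
        · rw [← pow_mul, Nat.mul_div_cancel' (Nat.dvd_of_mem_divisors hδ), hz]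

theorem exists_int_sum_coprime_pow_eq_mul {u k : ℕ} {w : ℂ} (hw : w ^ (k * u) = 1) :
    ∃ c : ℤ, ∑ b ∈ range (k * u) with b.Coprime u, w ^ b = k * c := by
  have hshift : ∀ b, (if (u + b).Coprime u then w ^ (u + b) else 0) =
      w ^ u * if b.Coprime u then w ^ b else 0 := by
    intro b
    simp only [Nat.coprime_self_add_left, pow_add, mul_ite, mul_zero]
  rw [sum_filter, sum_range_mul_eq_geom_sum_mul hshift,
    geom_sum_eq_ite_of_pow_eq_one (by rw [← pow_mul, mul_comm, hw]), ← sum_filter]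
  split_ifs with hwu
  · obtain ⟨c, hc⟩ := exists_int_sum_coprime_pow_eq hwu
    exact ⟨c, by rw [hc]⟩
  · exact ⟨0, by simp⟩

theorem Nat.Coprime.gcd_mul_dvd_left_iff {k u : ℕ} (h : k.Coprime u) (b : ℕ) :
    b.gcd (k * u) ∣ k ↔ b.Coprime u := by
  rw [Nat.Coprime.gcd_mul b h]
  constructor
  · intro hdvd
    exact Nat.eq_one_of_dvd_coprimes h (dvd_of_mul_left_dvd hdvd) (b.gcd_dvd_right u)
  · intro hb
    rw [hb, mul_one]
    exact b.gcd_dvd_right k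

theorem Nat.gcd_mul_mem_iff_coprime {d u : ℕ} (hd : 0 < d) (hu : Odd u) (b : ℕ) :
    Nat.gcd (d * b) (d * (4 * u)) ∈ ({d, 2 * d, 4 * d} : Set ℕ) ↔ b.Coprime u := by
  have h4u : Nat.Coprime 4 u := Nat.Coprime.pow_left 2 (Nat.coprime_two_left.mpr hu)
  have hdiv4 : Nat.divisors 4 = {1, 2, 4} := by decide
  have hdvd4 : ∀ g, g ∣ 4 ↔ g ∈ ({1, 2, 4} : Finset ℕ) := fun g => by
    rw [← hdiv4, Nat.mem_divisors, and_iff_left four_ne_zero]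
  rw [Nat.gcd_mul_left, ← h4u.gcd_mul_dvd_left_iff b, hdvd4]
  simp [mul_comm _ d, hd.ne']

noncomputable def dftMatrix (n : ℕ) [NeZero n] : Matrix (ZMod n) (ZMod n) ℂ :=
  of fun x y => ZMod.stdAddChar (-(x * y))

section Circulant

variable {n : ℕ} [NeZero n]

noncomputable def circulantEigenvalue (S : Set (ZMod n)) (j : ZMod n) : ℂ :=
  ∑ x, S.indicator (fun x => ZMod.stdAddChar (x * j)) x

theorem dftMatrix_mul_conj :
    dftMatrix n * of (fun x y => ZMod.stdAddChar (x * y)) = (n : ℂ) • 1 := by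
  ext a b
  have hterm : ∀ y : ZMod n, ZMod.stdAddChar (-(a * y)) * ZMod.stdAddChar (y * b) =
      ZMod.stdAddChar (y * (b - a)) := fun y => by
    rw [← AddChar.map_add_eq_mul]; ring_nf
  simp only [dftMatrix, mul_apply, of_apply, hterm, Matrix.smul_apply, one_apply, sub_eq_zero,
    AddChar.sum_mulShift _ (ZMod.isPrimitive_stdAddChar n), ZMod.card, eq_comm (a := b)]
  split_ifs <;> simp

theorem isUnit_dftMatrix : IsUnit (dftMatrix n) := by
  refine IsUnit.of_mul_eq_one ((n : ℂ)⁻¹ • of fun x y => ZMod.stdAddChar (x * y)) ?_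
  rw [Matrix.mul_smul, dftMatrix_mul_conj, smul_smul, inv_mul_cancel₀ (NeZero.ne _), one_smul]

theorem cayAdj_mul_dftMatrix (S : Set (ZMod n)) :
    cayAdj S * dftMatrix n = dftMatrix n * diagonal (circulantEigenvalue S) := by
  classical
  ext x j
  rw [mul_diagonal, mul_apply, circulantEigenvalue, mul_sum,
    ← (Equiv.subLeft x).sum_comp]
  refine sum_congr rfl fun s _ => ?_
  simp only [cayAdj, dftMatrix, of_apply, Equiv.subLeft_apply, sub_sub_cancel, Set.indicator_apply]
  split_ifs
  · rw [one_mul, ← AddChar.map_add_eq_mul]; ring_nf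
  · simp

theorem transitionM_cayAdj_eq_one {S : Set (ZMod n)} {t : ℝ}
    (h : ∀ j, Complex.exp (I * t * circulantEigenvalue S j) = 1) :
    transitionM (cayAdj S) t = 1 := by
  set U := isUnit_dftMatrix (n := n).unit
  have hconj : cayAdj S = U * diagonal (circulantEigenvalue S) * U⁻¹ := by
    rw [coe_units_inv, IsUnit.unit_spec, ← cayAdj_mul_dftMatrix, Matrix.mul_assoc,
      mul_nonsing_inv _ ((isUnit_iff_isUnit_det _).mp isUnit_dftMatrix), Matrix.mul_one]
  rw [transitionM, hconj, ← Matrix.smul_mul, ← Matrix.mul_smul, exp_units_conj, ← diagonal_smul,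
    exp_diagonal]
  have hexp : NormedSpace.exp ((I * t) • circulantEigenvalue S) = fun _ => 1 := by
    funext j
    rw [Pi.coe_exp, Pi.smul_apply, smul_eq_mul, ← Complex.exp_eq_exp_ℂ, h]
  rw [hexp, diagonal_one, Matrix.mul_one, Units.mul_inv]

theorem circulantEigenvalue_setOf_val (P : ℕ → Prop) [DecidablePred P] (j : ZMod n) :
    circulantEigenvalue {x : ZMod n | P x.val} j =
      ∑ a ∈ range n with P a, ZMod.stdAddChar j ^ a := by
  have hpow : ∀ x : ZMod n, ZMod.stdAddChar (x * j) = ZMod.stdAddChar j ^ x.val := fun x => by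
    rw [← AddChar.map_nsmul_eq_pow, nsmul_eq_mul, ZMod.natCast_zmod_val]
  obtain ⟨k, rfl⟩ : ∃ k, n = k + 1 := Nat.exists_eq_succ_of_ne_zero (NeZero.ne n)
  simp only [circulantEigenvalue, Set.indicator_apply, Set.mem_ofPred_eq, hpow, sum_filter]
  exact Fin.sum_univ_eq_sum_range (fun a => if P a then ZMod.stdAddChar j ^ a else 0) (k + 1)

end Circulant

theorem exists_circulantEigenvalue_eq_four_mul {n d u : ℕ} [NeZero n] (hd : 0 < d) (hu : Odd u)
    (hn : n = d * (4 * u)) (j : ZMod n) :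
    ∃ c : ℤ, circulantEigenvalue {x : ZMod n | x.val.gcd n ∈ ({d, 2 * d, 4 * d} : Set ℕ)} j =
      4 * c := by
  set z := ZMod.stdAddChar j
  have hz : z ^ n = 1 := by
    rw [← AddChar.map_nsmul_eq_pow, nsmul_eq_mul, ZMod.natCast_self, zero_mul,
      AddChar.map_zero_eq_one]
  have hdvd : ∀ a, a.gcd n ∈ ({d, 2 * d, 4 * d} : Set ℕ) → d ∣ a := by
    rintro a (h | h | h)
    · exact h ▸ a.gcd_dvd_left n
    all_goals exact (Dvd.intro_left _ h.symm).trans (a.gcd_dvd_left n)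
  rw [circulantEigenvalue_setOf_val (fun a => a.gcd n ∈ ({d, 2 * d, 4 * d} : Set ℕ)), sum_filter,
    ← sum_filter_of_ne fun a _ ha => hdvd a (by by_contra h; exact ha (if_neg h))]
  subst hn
  rw [sum_range_mul_filter_dvd _ hd]
  simp_rw [Nat.gcd_mul_mem_iff_coprime hd hu, pow_mul, ← sum_filter]
  obtain ⟨c, hc⟩ := exists_int_sum_coprime_pow_eq_mul (k := 4) (w := z ^ d) (by rw [← pow_mul, hz])
  exact ⟨c, by rw [hc]; norm_num⟩

/-- If `n` and `d` are positive integers with `d ∣ n` and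
`n / d ≡ 4 (mod 8)`, then the transition matrix of the integral circulant graph
`ICG_n({d, 2d, 4d})` at time `π/2` is the identity matrix. -/
theorem icg_periodic_of_mod_eight_eq_four (n d : ℕ) [NeZero n] (hd0 : 0 < d) (hdn : d ∣ n)
    (h8 : n / d % 8 = 4) :
    transitionM (icgAdj n {d, 2 * d, 4 * d}) (Real.pi / 2) = 1 := by
  obtain ⟨u, hu, hn⟩ : ∃ u, Odd u ∧ n = d * (4 * u) :=
    ⟨n / d / 4, ⟨n / d / 8, by omega⟩, (Nat.mul_div_cancel' hdn).symm.trans (by congr 1; omega)⟩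
  refine transitionM_cayAdj_eq_one fun j => ?_
  obtain ⟨c, hc⟩ := exists_circulantEigenvalue_eq_four_mul hd0 hu hn j
  rw [hc, ← Complex.exp_int_mul_two_pi_mul_I c]
  push_cast
  ring_nf
end

section
/- Let n be a positive multiple of 4 and let D ∈ 𝒟_n. Then the transition matrix of the integral circulant graph ICG_n(D) at time π/2 is the identity matrix; in particular ICG_n(D) is connected and periodic at π/2. -/
open Matrix Complex

/-- `D ∈ 𝒟_n`: `D` is a set of positive divisors of `n` of the form
`D = D̃ ∪ D' ∪ 2D' ∪ 4D'` with `D̃ ⊆ {d ∣ n : n/d ≡ 0 (mod 8)}` and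
`D' ⊆ {d ∣ n : n/d ≡ 4 (mod 8)}`, such that (the image of) `D` generates the group `ℤ_n`. -/
def memScrD (n : ℕ) (D : Set ℕ) : Prop :=
  (∀ d ∈ D, 0 < d ∧ d ∣ n) ∧
  (∃ Dt D' : Set ℕ,
      Dt ⊆ {d : ℕ | d ∣ n ∧ n / d % 8 = 0} ∧
      D' ⊆ {d : ℕ | d ∣ n ∧ n / d % 8 = 4} ∧
      D = Dt ∪ D' ∪ (fun d => 2 * d) '' D' ∪ (fun d => 4 * d) '' D') ∧
  AddSubgroup.closure {x : ZMod n | ∃ d ∈ D, x = (d : ZMod n)} = ⊤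

/-!
`ICG_n(D)` is circulant, so the characters of `ℤ_n` diagonalise it and its eigenvalues are the
character sums `λ_k = ∑_{x ∈ S} ζ^{kx}` over the connection set `S`; hence `exp(iπ/2 · A) = 1`
as soon as every `λ_k` lies in `4ℤ`. Split `S` along `D = D̃ ∪ D' ∪ 2D' ∪ 4D'`. For `d' ∈ D'`
write `n = 4 d' u` with `u` odd: then `gcd(x, n) ∈ {d', 2d', 4d'}` iff `gcd(x, n/4) = d'`, so
the three classes merge into one. By Möbius inversion the character sum over a class
`gcd(x, m) = d` is `∑_{e ∣ m/d} μ(e) σ(de)`, where `σ(c)`, the sum over the subgroup of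
multiples of `c`, is `0` or `n/c`; and `4 ∣ n/(de)` for squarefree `e` in both cases
(`8 ∣ n/d` for `d ∈ D̃`, `n/(d'e) = 4 · u/e`). Connectivity holds because `D` generates `ℤ_n`.
-/

open scoped ArithmeticFunction.Moebius

theorem SimpleGraph.circulantGraph_connected_of_closure_eq_top {G : Type*} [AddGroup G]
    {s : Set G} (hs : AddSubgroup.closure s = ⊤) : (circulantGraph s).Connected := by
  have translate : ∀ {u v : G} (d : G), (circulantGraph s).Reachable u v →
      (circulantGraph s).Reachable (u + d) (v + d) := fun d h =>
    h.map ⟨(· + d), circulantGraph_adj_translate.mpr⟩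
  have reach : ∀ v, (circulantGraph s).Reachable 0 v := by
    intro v
    induction (hs ▸ AddSubgroup.mem_top v : v ∈ AddSubgroup.closure s) using
        AddSubgroup.closure_induction with
    | mem v hv =>
      by_cases h0 : v = 0
      · exact h0 ▸ Reachable.refl (G := circulantGraph s) 0
      · exact Adj.reachable (by simp [Ne.symm h0, hv])
    | zero => exact Reachable.refl 0
    | add x y _ _ hx hy => exact hy.trans (by simpa using translate y hx)
    | neg x _ hx => simpa using (translate (-x) hx).symm
  exact ⟨fun u v => by simpa using translate u (reach (v - u))⟩

theorem Matrix.exp_eq_one_of_mul_eq_mul_diagonal {ι : Type*} [Fintype ι] [DecidableEq ι]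
    {A F : Matrix ι ι ℂ} {d : ι → ℂ} (hF : IsUnit F) (hAF : A * F = F * diagonal d)
    (hd : ∀ i, NormedSpace.exp (d i) = 1) : NormedSpace.exp A = 1 := by
  have hdet : IsUnit F.det := (isUnit_iff_isUnit_det F).mp hF
  have hA : A = F * diagonal d * F⁻¹ := by rw [← hAF, mul_nonsing_inv_cancel_right _ _ hdet]
  have hexp : NormedSpace.exp d = fun _ => 1 := funext fun i => by simpa using hd i
  rw [hA, exp_conj _ _ hF, exp_diagonal, hexp, diagonal_one, Matrix.mul_one,
    mul_nonsing_inv _ hdet]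

namespace ZMod

noncomputable def dftMatrix (n : ℕ) [NeZero n] : Matrix (ZMod n) (ZMod n) ℂ :=
  of fun a k => stdAddChar (-(k * a))

variable {n : ℕ} [NeZero n]

theorem dftMatrix_mul_inverse :
    dftMatrix n * (n : ℂ)⁻¹ • of (fun k b : ZMod n => stdAddChar (k * b)) = 1 := by
  ext a b
  have hn : (n : ℂ) ≠ 0 := Nat.cast_ne_zero.mpr (NeZero.ne n)
  have hterm : ∀ k : ZMod n, stdAddChar (-(k * a)) * ((n : ℂ)⁻¹ * stdAddChar (k * b)) =
      (n : ℂ)⁻¹ * stdAddChar (k * (b - a)) := fun k => by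
    rw [mul_sub, sub_eq_neg_add, AddChar.map_add_eq_mul]; ring
  simp only [dftMatrix, mul_apply, Matrix.smul_apply, of_apply, smul_eq_mul, hterm]
  rw [← Finset.mul_sum, AddChar.sum_mulShift _ (isPrimitive_stdAddChar n), card, one_apply]
  by_cases hab : a = b
  · simp [hab, hn]
  · simp [hab, sub_eq_zero, Ne.symm hab]

theorem isUnit_dftMatrix : IsUnit (dftMatrix n) :=
  (isUnit_iff_isUnit_det _).mpr (isUnit_det_of_right_inverse dftMatrix_mul_inverse)

theorem circulant_mul_dftMatrix (f : ZMod n → ℂ) :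
    circulant f * dftMatrix n = dftMatrix n * diagonal fun k => ∑ s, f s * stdAddChar (k * s) := by
  ext a k
  rw [mul_diagonal, mul_apply, dftMatrix, of_apply, Finset.mul_sum]
  refine Fintype.sum_equiv (Equiv.subLeft a) _ _ fun b => ?_
  simp only [circulant_apply, of_apply, Equiv.subLeft_apply]
  rw [show -(k * b) = -(k * a) + k * (a - b) by ring, AddChar.map_add_eq_mul]
  ring

end ZMod

theorem Matrix.exp_circulant_eq_one {n : ℕ} [NeZero n] {f : ZMod n → ℂ}
    (hf : ∀ k, NormedSpace.exp (∑ s, f s * ZMod.stdAddChar (k * s)) = 1) :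
    NormedSpace.exp (circulant f) = 1 :=
  exp_eq_one_of_mul_eq_mul_diagonal ZMod.isUnit_dftMatrix (ZMod.circulant_mul_dftMatrix f) hf

theorem Matrix.exp_I_pi_div_two_smul_circulant_eq_one {n : ℕ} [NeZero n] {f : ZMod n → ℂ}
    (hf : ∀ k, ∑ s, f s * ZMod.stdAddChar (k * s) ∈ AddSubgroup.zmultiples (4 : ℂ)) :
    NormedSpace.exp ((I * ((Real.pi / 2 : ℝ) : ℂ)) • circulant f) = 1 := by
  rw [← circulant_smul]
  refine exp_circulant_eq_one fun k => ?_
  obtain ⟨z, hz⟩ := hf k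
  simp only [Pi.smul_apply, smul_eq_mul, mul_assoc, ← Finset.mul_sum, ← hz, zsmul_eq_mul]
  rw [← Complex.exp_eq_exp_ℂ, ← Complex.exp_int_mul_two_pi_mul_I z]
  push_cast
  ring_nf

theorem AddChar.sum_ite_mem_mem_zmultiples_card {G : Type*} [AddGroup G] [Fintype G]
    (H : AddSubgroup G) [DecidablePred (· ∈ H)] (ψ : AddChar G ℂ) :
    ∑ x, (if x ∈ H then ψ x else 0) ∈ AddSubgroup.zmultiples (Nat.card H : ℂ) := by
  classical
  have : ∑ x, (if x ∈ H then ψ x else 0) = ∑ h : H, ψ.compAddMonoidHom H.subtype h := by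
    rw [← Finset.sum_filter]
    exact Finset.sum_subtype _ (by simp) _
  rw [this, AddChar.sum_eq_ite, Nat.card_eq_fintype_card]
  split_ifs
  · exact AddSubgroup.mem_zmultiples _
  · exact zero_mem _

theorem natCast_mem_zmultiples_natCast {a b : ℕ} (h : b ∣ a) :
    (a : ℂ) ∈ AddSubgroup.zmultiples (b : ℂ) := by
  obtain ⟨t, rfl⟩ := h
  exact ⟨t, by simp [mul_comm]⟩

namespace ArithmeticFunction

theorem sum_divisors_moebius (m : ℕ) :
    ∑ e ∈ m.divisors, (μ e : ℤ) = if m = 1 then 1 else 0 := by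
  rw [← coe_mul_zeta_apply, moebius_mul_coe_zeta, one_apply]

theorem sum_moebius_filter_mul_dvd {m d y : ℕ} (hm : m ≠ 0) (hd : d ≠ 0) :
    ∑ e ∈ m.divisors with d * e ∣ y, (μ e : ℤ) = if y.gcd (d * m) = d then 1 else 0 := by
  by_cases hdy : d ∣ y
  · obtain ⟨z, rfl⟩ := hdy
    have hfilter : {e ∈ m.divisors | d * e ∣ d * z} = (m.gcd z).divisors := by
      ext e
      simp [Nat.mul_dvd_mul_iff_left (Nat.pos_of_ne_zero hd), Nat.dvd_gcd_iff, hm]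
    rw [hfilter, sum_divisors_moebius, Nat.gcd_mul_left, Nat.gcd_comm z]
    simp only [Nat.mul_eq_left hd]
  · rw [Finset.sum_eq_zero, if_neg]
    · exact fun h => hdy (h ▸ Nat.gcd_dvd_left y (d * m))
    · intro e he
      exact absurd (dvd_of_mul_right_dvd (Finset.mem_filter.mp he).2) hdy

end ArithmeticFunction

namespace ZMod

variable {n : ℕ} [NeZero n]

theorem mem_zmultiples_natCast_iff_s11 {c : ℕ} (hc : c ∣ n) {x : ZMod n} :
    x ∈ AddSubgroup.zmultiples (c : ZMod n) ↔ c ∣ x.val := by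
  constructor
  · rintro ⟨z, rfl⟩
    have : z • (c : ZMod n) = ((z * c : ℤ) : ZMod n) := by push_cast; exact zsmul_eq_mul _ _
    simp only [this]
    rw [← Int.natCast_dvd_natCast, val_intCast]
    exact (EuclideanDomain.dvd_mod_iff (Int.natCast_dvd_natCast.mpr hc)).mpr (dvd_mul_left _ _)
  · rintro ⟨q, hq⟩
    rw [← natCast_zmod_val x, hq, Nat.cast_mul, mul_comm, ← nsmul_eq_mul]
    exact AddSubgroup.nsmul_mem _ (AddSubgroup.mem_zmultiples _) q

theorem card_zmultiples_natCast_s11 {c : ℕ} (hc : c ∣ n) :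
    Nat.card (AddSubgroup.zmultiples (c : ZMod n)) = n / c := by
  rw [Nat.card_zmultiples, addOrderOf_coe _ (NeZero.ne n), Nat.gcd_eq_right hc]

theorem sum_ite_dvd_val_mem_zmultiples {c : ℕ} (hc : c ∣ n) (ψ : AddChar (ZMod n) ℂ) :
    ∑ x : ZMod n, (if c ∣ x.val then ψ x else 0) ∈ AddSubgroup.zmultiples ((n / c : ℕ) : ℂ) := by
  classical
  rw [← card_zmultiples_natCast_s11 hc]
  convert ψ.sum_ite_mem_mem_zmultiples_card (AddSubgroup.zmultiples (c : ZMod n)) using 3 with x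
  exact (mem_zmultiples_natCast_iff_s11 hc).symm

theorem sum_ite_gcd_eq_mem_zmultiples {m d q : ℕ} (hm : m ∣ n) (hd : d ∣ m)
    (hq : ∀ e ∈ (m / d).divisors, Squarefree e → q ∣ n / (d * e)) (ψ : AddChar (ZMod n) ℂ) :
    ∑ x : ZMod n, (if x.val.gcd m = d then ψ x else 0) ∈ AddSubgroup.zmultiples (q : ℂ) := by
  have hm0 : m ≠ 0 := ne_zero_of_dvd_ne_zero (NeZero.ne n) hm
  have hd0 : d ≠ 0 := ne_zero_of_dvd_ne_zero hm0 hd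
  have hdm : d * (m / d) = m := Nat.mul_div_cancel' hd
  have moebius_inversion : ∀ x : ZMod n, (if x.val.gcd m = d then ψ x else 0) =
      ∑ e ∈ (m / d).divisors, μ e • (if d * e ∣ x.val then ψ x else 0) := by
    intro x
    have h := ArithmeticFunction.sum_moebius_filter_mul_dvd (y := x.val)
      (right_ne_zero_of_mul (hdm ▸ hm0)) hd0
    rw [hdm] at h
    simp_rw [smul_ite, smul_zero]
    rw [← Finset.sum_filter, ← Finset.sum_smul, h]
    split_ifs <;> simp
  rw [Finset.sum_congr rfl fun x _ => moebius_inversion x, Finset.sum_comm]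
  refine AddSubgroup.sum_mem _ fun e he => ?_
  rw [← Finset.smul_sum]
  by_cases hsf : Squarefree e
  · have hde : d * e ∣ n := (hdm ▸ mul_dvd_mul_left d (Nat.dvd_of_mem_divisors he)).trans hm
    refine AddSubgroup.zsmul_mem _ ?_ _
    exact AddSubgroup.zmultiples_le_of_mem (natCast_mem_zmultiples_natCast (hq e he hsf))
      (sum_ite_dvd_val_mem_zmultiples hde ψ)
  · rw [ArithmeticFunction.moebius_eq_zero_of_not_squarefree hsf, zero_smul]
    exact zero_mem _

theorem sum_ite_gcd_mem_eq_sum_divisors {m : ℕ} {M : Type*} [AddCommMonoid M] (hm : m ≠ 0)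
    (E : Set ℕ) [DecidablePred (· ∈ E)] (f : ZMod n → M) :
    ∑ x : ZMod n, (if x.val.gcd m ∈ E then f x else 0) =
      ∑ d ∈ m.divisors with d ∈ E, ∑ x : ZMod n, (if x.val.gcd m = d then f x else 0) := by
  rw [Finset.sum_comm]
  refine Fintype.sum_congr _ _ fun x => ?_
  rw [Finset.sum_ite_eq]
  simp [Nat.gcd_dvd_right, hm]

end ZMod

namespace Nat

theorem four_dvd_div_of_squarefree {a e : ℕ} (ha : 8 ∣ a) (he : e ∣ a) (hsf : Squarefree e) :
    4 ∣ a / e := by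
  rcases eq_or_ne a 0 with rfl | ha0
  · simp
  have hq0 : a / e ≠ 0 := (Nat.div_pos (Nat.le_of_dvd (Nat.pos_of_ne_zero ha0) he)
    (Nat.pos_of_dvd_of_pos he (Nat.pos_of_ne_zero ha0))).ne'
  have h8 := (Nat.prime_two.pow_dvd_iff_le_factorization ha0).mp (show 2 ^ 3 ∣ a from ha)
  have h1 := hsf.natFactorization_le_one 2
  rw [show 4 = 2 ^ 2 from rfl, Nat.prime_two.pow_dvd_iff_le_factorization hq0,
    Nat.factorization_div he, Finsupp.tsub_apply]
  omega

theorem exists_odd_of_div_mod_eight_eq_four {n d : ℕ} (hd : d ∣ n) (h : n / d % 8 = 4) :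
    ∃ u, Odd u ∧ n = 4 * (d * u) := by
  obtain ⟨q, rfl⟩ := hd
  rcases eq_or_ne d 0 with rfl | hd0
  · simp at h
  rw [Nat.mul_div_cancel_left q (Nat.pos_of_ne_zero hd0)] at h
  exact ⟨q / 4, ⟨q / 8, by omega⟩, by rw [mul_left_comm]; congr 1; omega⟩

theorem dvd_div_four_of_div_mod_eight_eq_zero {n d : ℕ} (hd : d ∣ n) (h : n / d % 8 = 0) :
    d ∣ n / 4 := by
  obtain ⟨q, rfl⟩ := hd
  rcases eq_or_ne d 0 with rfl | hd0
  · simp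
  rw [Nat.mul_div_cancel_left q (Nat.pos_of_ne_zero hd0)] at h
  rw [Nat.mul_div_assoc d (by omega : 4 ∣ q)]
  exact dvd_mul_right d _

theorem gcd_mul_odd_eq_iff {d u g : ℕ} (hu : Odd u) (hg : g ∣ 4 * (d * u)) :
    g.gcd (d * u) = d ↔ g = d ∨ g = 2 * d ∨ g = 4 * d := by
  have h2 : Coprime 2 u := Nat.coprime_two_left.mpr hu
  constructor
  · intro h
    obtain ⟨k, rfl⟩ : d ∣ g := h ▸ Nat.gcd_dvd_left _ _
    rcases Nat.eq_zero_or_pos d with rfl | hd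
    · simp
    rw [Nat.gcd_mul_left, Nat.mul_eq_left hd.ne'] at h
    rw [mul_left_comm, Nat.mul_dvd_mul_iff_left hd] at hg
    have hk : k ∣ 4 := Nat.Coprime.dvd_of_dvd_mul_right h hg
    have : k ≤ 4 := Nat.le_of_dvd (by norm_num) hk
    interval_cases k <;> simp_all [mul_comm]
  · rintro (rfl | rfl | rfl)
    · exact Nat.gcd_mul_right_right u g
    · rw [mul_comm d u, Nat.gcd_mul_right, h2, one_mul]
    · rw [mul_comm d u, Nat.gcd_mul_right, show 4 = 2 ^ 2 from rfl, h2.pow_left 2, one_mul]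

end Nat

theorem mem_iff_mem_or_gcd_div_four_mem {n g : ℕ} {D Dt D' : Set ℕ}
    (hDt : Dt ⊆ {d : ℕ | d ∣ n ∧ n / d % 8 = 0}) (hD' : D' ⊆ {d : ℕ | d ∣ n ∧ n / d % 8 = 4})
    (hD : D = Dt ∪ D' ∪ (fun d => 2 * d) '' D' ∪ (fun d => 4 * d) '' D') (hg : g ∣ n) :
    (g ∈ D ↔ g ∈ Dt ∨ g.gcd (n / 4) ∈ D') ∧ ¬(g ∈ Dt ∧ g.gcd (n / 4) ∈ D') := by
  have gcd_eq_iff : ∀ d ∈ D', g.gcd (n / 4) = d ↔ g = d ∨ g = 2 * d ∨ g = 4 * d := by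
    intro d hd
    obtain ⟨u, hu, hn⟩ := Nat.exists_odd_of_div_mod_eight_eq_four (hD' hd).1 (hD' hd).2
    rw [hn, Nat.mul_div_cancel_left _ (by norm_num)]
    exact Nat.gcd_mul_odd_eq_iff hu (hn ▸ hg)
  have gcd_eq_self : g ∈ Dt → g.gcd (n / 4) = g := fun h =>
    Nat.gcd_eq_left (Nat.dvd_div_four_of_div_mod_eight_eq_zero (hDt h).1 (hDt h).2)
  subst hD
  refine ⟨⟨?_, ?_⟩, fun ⟨ht, h'⟩ => ?_⟩
  · rintro (((ht | h') | ⟨d, hd, rfl⟩) | ⟨d, hd, rfl⟩)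
    · exact Or.inl ht
    · exact Or.inr (by rwa [(gcd_eq_iff g h').mpr (Or.inl rfl)])
    · exact Or.inr (by rwa [(gcd_eq_iff d hd).mpr (Or.inr (Or.inl rfl))])
    · exact Or.inr (by rwa [(gcd_eq_iff d hd).mpr (Or.inr (Or.inr rfl))])
  · rintro (ht | h')
    · exact Or.inl (Or.inl (Or.inl ht))
    · rcases (gcd_eq_iff _ h').mp rfl with h | h | h
      · exact Or.inl (Or.inl (Or.inr (h ▸ h')))
      · exact Or.inl (Or.inr ⟨_, h', h.symm⟩)
      · exact Or.inr ⟨_, h', h.symm⟩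
  · have h0 := (hDt ht).2
    have h4 := (hD' (gcd_eq_self ht ▸ h')).2
    omega

namespace ZMod

variable {n : ℕ} [NeZero n]

theorem sum_ite_gcd_eq_mem_zmultiples_four_of_div_mod_eight_eq_zero {d : ℕ} (hd : d ∣ n)
    (h : n / d % 8 = 0) (ψ : AddChar (ZMod n) ℂ) :
    ∑ x : ZMod n, (if x.val.gcd n = d then ψ x else 0) ∈ AddSubgroup.zmultiples (4 : ℂ) := by
  refine sum_ite_gcd_eq_mem_zmultiples (q := 4) dvd_rfl hd (fun e he hsf => ?_) ψ
  rw [← Nat.div_div_eq_div_mul]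
  exact Nat.four_dvd_div_of_squarefree (Nat.dvd_of_mod_eq_zero h) (Nat.dvd_of_mem_divisors he) hsf

theorem sum_ite_gcd_div_four_eq_mem_zmultiples_four_of_div_mod_eight_eq_four {d : ℕ}
    (hd : d ∣ n) (h : n / d % 8 = 4) (ψ : AddChar (ZMod n) ℂ) :
    ∑ x : ZMod n, (if x.val.gcd (n / 4) = d then ψ x else 0) ∈ AddSubgroup.zmultiples (4 : ℂ) := by
  obtain ⟨u, -, hn⟩ := Nat.exists_odd_of_div_mod_eight_eq_four hd h
  have hd0 : 0 < d := Nat.pos_of_dvd_of_pos hd (Nat.pos_of_ne_zero (NeZero.ne n))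
  have hm : n / 4 = d * u := by rw [hn, Nat.mul_div_cancel_left _ (by norm_num)]
  refine sum_ite_gcd_eq_mem_zmultiples (q := 4) (Nat.div_dvd_of_dvd ⟨_, hn⟩)
    (hm ▸ dvd_mul_right d u) (fun e he _ => ?_) ψ
  rw [hm, Nat.mul_div_cancel_left _ hd0] at he
  obtain ⟨w, rfl⟩ := Nat.dvd_of_mem_divisors he
  have he0 : 0 < e := Nat.pos_of_mem_divisors he
  rw [hn, show 4 * (d * (e * w)) = d * e * (4 * w) by ring,
    Nat.mul_div_cancel_left _ (Nat.mul_pos hd0 he0)]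
  exact dvd_mul_right 4 w

theorem sum_ite_gcd_mem_mem_zmultiples_four (h4 : 4 ∣ n) {D : Set ℕ} [DecidablePred (· ∈ D)]
    (hD : memScrD n D) (ψ : AddChar (ZMod n) ℂ) :
    ∑ x : ZMod n, (if x.val.gcd n ∈ D then ψ x else 0) ∈ AddSubgroup.zmultiples (4 : ℂ) := by
  classical
  obtain ⟨-, ⟨Dt, D', hDt, hD', hDeq⟩, -⟩ := hD
  have split : ∀ x : ZMod n, (if x.val.gcd n ∈ D then ψ x else 0) =
      (if x.val.gcd n ∈ Dt then ψ x else 0) + (if x.val.gcd (n / 4) ∈ D' then ψ x else 0) := by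
    intro x
    obtain ⟨hiff, hdisj⟩ :=
      mem_iff_mem_or_gcd_div_four_mem hDt hD' hDeq (Nat.gcd_dvd_right x.val n)
    rw [Nat.gcd_assoc, Nat.gcd_eq_right (Nat.div_dvd_of_dvd h4)] at hiff hdisj
    by_cases ht : x.val.gcd n ∈ Dt <;> by_cases h' : x.val.gcd (n / 4) ∈ D' <;> simp_all
  have hn4 : n / 4 ≠ 0 := (Nat.div_pos (Nat.le_of_dvd (Nat.pos_of_ne_zero (NeZero.ne n)) h4)
    (by norm_num)).ne'
  rw [Finset.sum_congr rfl fun x _ => split x, Finset.sum_add_distrib,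
    sum_ite_gcd_mem_eq_sum_divisors (NeZero.ne n), sum_ite_gcd_mem_eq_sum_divisors hn4]
  refine add_mem (AddSubgroup.sum_mem _ fun d hd => ?_) (AddSubgroup.sum_mem _ fun d hd => ?_)
  · obtain ⟨hdn, h⟩ := hDt (Finset.mem_filter.mp hd).2
    exact sum_ite_gcd_eq_mem_zmultiples_four_of_div_mod_eight_eq_zero hdn h ψ
  · obtain ⟨hdn, h⟩ := hD' (Finset.mem_filter.mp hd).2
    exact sum_ite_gcd_div_four_eq_mem_zmultiples_four_of_div_mod_eight_eq_four hdn h ψ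

end ZMod

theorem ZMod.closure_gcd_mem_eq_top {n : ℕ} {D : Set ℕ} (hD : memScrD n D) :
    AddSubgroup.closure {x : ZMod n | x.val.gcd n ∈ D} = ⊤ := by
  refine top_le_iff.mp (hD.2.2 ▸ AddSubgroup.closure_mono ?_)
  rintro _ ⟨d, hd, rfl⟩
  rw [Set.mem_ofPred_eq, ZMod.val_natCast, ← Nat.gcd_rec, Nat.gcd_eq_right (hD.1 d hd).2]
  exact hd

/-- Let `n` be a positive multiple of `4` and `D ∈ 𝒟_n`.  Then the
transition matrix of `ICG_n(D)` at time `π/2` is the identity matrix; in particular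
`ICG_n(D)` is connected and periodic at `π/2`. -/
theorem icg_scrD_periodic (n : ℕ) [NeZero n] (h4 : 4 ∣ n) (D : Set ℕ) (hD : memScrD n D) :
    transitionM (icgAdj n D) (Real.pi / 2) = 1 ∧
    (SimpleGraph.fromRel fun x y : ZMod n => Nat.gcd (x - y).val n ∈ D).Connected ∧
    (∃ γ : ℂ, ‖γ‖ = 1 ∧ transitionM (icgAdj n D) (Real.pi / 2) = γ • 1) := by
  classical
  have hone : transitionM (icgAdj n D) (Real.pi / 2) = 1 := by
    refine exp_I_pi_div_two_smul_circulant_eq_one fun k => ?_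
    convert ZMod.sum_ite_gcd_mem_mem_zmultiples_four h4 hD (ZMod.stdAddChar.mulShift k) using 2
      with x
    simp [Set.indicator_apply, AddChar.mulShift_apply]
  exact ⟨hone, SimpleGraph.circulantGraph_connected_of_closure_eq_top
    (ZMod.closure_gcd_mem_eq_top hD), 1, norm_one, by rw [hone, one_smul]⟩
end

section
/- Let Γ = ℤ_{m₁} ⊕ ⋯ ⊕ ℤ_{m_r} with r > 1, let D be a set of positive divisors of m₁, let 𝐃 = {(d, 1, …, 1) : d ∈ D}, and let Γ' = ℤ_{m₂} ⊕ ⋯ ⊕ ℤ_{m_r}. Then the gcd-graph Cay(Γ, S_Γ(𝐃)) is equal (as a graph on the vertex set ℤ_{m₁} × Γ') to the Kronecker product ICG_{m₁}(D) × Cay(Γ', S_{Γ'}({(1, …, 1)})). -/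
open Matrix Complex

/-!
The connection set of the gcd-graph constrains the first coordinate of a difference only through
`D` and the remaining coordinates only through coprimality, so it is the preimage of a product set
`A ×ˢ B` under the additive isomorphism `Γ ≃ ℤ_{m₀} × Γ'`. The Cayley graph of a product set is
the Kronecker product of the two Cayley graphs, because `1_{A × B}(a, b) = 1_A(a) · 1_B(b)`.
-/

lemma cayAdj_apply {G : Type*} [AddGroup G] (S : Set G) (x y : G) :
    cayAdj S x y = S.indicator 1 (x - y) :=
  rfl

lemma cayAdj_preimage {G H : Type*} [AddGroup G] [AddGroup H] (f : G →+ H) (S : Set H)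
    (x y : G) : cayAdj (f ⁻¹' S) x y = cayAdj S (f x) (f y) := by
  rw [cayAdj_apply, cayAdj_apply, ← map_sub]
  exact Set.indicator_comp_right (s := S) (g := 1) f

lemma cayAdj_prod {G H : Type*} [AddGroup G] [AddGroup H] (A : Set G) (B : Set H) :
    cayAdj (A ×ˢ B) = kroneckerMap (· * ·) (cayAdj A) (cayAdj B) := by
  ext ⟨a, c⟩ ⟨b, d⟩
  exact Set.indicator_prod_one

def Fin.headTailAddHom {n : ℕ} (G : Fin (n + 1) → Type*) [∀ i, AddZeroClass (G i)] :
    (∀ i, G i) →+ G 0 × ∀ i : Fin n, G i.succ where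
  toFun x := (x 0, Fin.tail x)
  map_zero' := rfl
  map_add' _ _ := rfl

theorem gcdGraph_eq_kronecker_general (r : ℕ) (m : Fin (r + 1) → ℕ) (D : Set ℕ) :
    ∀ x y : (∀ i, ZMod (m i)),
      cayAdj {z : ∀ i, ZMod (m i) |
          ∃ d ∈ D, Nat.gcd (z 0).val (m 0) = d ∧
            ∀ i : Fin r, Nat.gcd (z i.succ).val (m i.succ) = 1} x y =
      Matrix.kroneckerMap (· * ·)
        (icgAdj (m 0) D)
        (cayAdj {z : ∀ i : Fin r, ZMod (m i.succ) |
            ∀ i : Fin r, Nat.gcd (z i).val (m i.succ) = 1})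
        (x 0, Fin.tail x) (y 0, Fin.tail y) := by
  intro x y
  have hS : {z : ∀ i, ZMod (m i) |
        ∃ d ∈ D, Nat.gcd (z 0).val (m 0) = d ∧
          ∀ i : Fin r, Nat.gcd (z i.succ).val (m i.succ) = 1} =
      Fin.headTailAddHom (fun i => ZMod (m i)) ⁻¹' ({a : ZMod (m 0) | Nat.gcd a.val (m 0) ∈ D} ×ˢ
        {z : ∀ i : Fin r, ZMod (m i.succ) | ∀ i : Fin r, Nat.gcd (z i).val (m i.succ) = 1}) := by
    ext z
    exact ⟨fun ⟨_, hd, hgcd, hcop⟩ => ⟨show _ ∈ D from hgcd ▸ hd, hcop⟩,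
      fun ⟨hd, hcop⟩ => ⟨_, hd, rfl, hcop⟩⟩
  rw [hS, cayAdj_preimage, cayAdj_prod]
  rfl

/-- Let `Γ = ℤ_{m₀} ⊕ ⋯ ⊕ ℤ_{m_r}` (at least two factors), let `D` be a set
of positive divisors of `m₀`, let `𝐃 = {(d, 1, …, 1) : d ∈ D}`, and let
`Γ' = ℤ_{m₁} ⊕ ⋯ ⊕ ℤ_{m_r}`.  Then the gcd-graph `Cay(Γ, S_Γ(𝐃))` equals, as a graph on the
vertex set `ℤ_{m₀} × Γ'` (via `x ↦ (x 0, Fin.tail x)`), the Kronecker product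
`ICG_{m₀}(D) × Cay(Γ', S_{Γ'}({(1, …, 1)}))`.  (Convention: `gcd(0, n) = n`.) -/
theorem gcdGraph_eq_kronecker (r : ℕ) (hr : 1 ≤ r) (m : Fin (r + 1) → ℕ)
    (hm : ∀ i, 0 < m i) (D : Set ℕ) (hD : ∀ d ∈ D, 0 < d ∧ d ∣ m 0) :
    ∀ x y : (∀ i, ZMod (m i)),
      cayAdj {z : ∀ i, ZMod (m i) |
          ∃ d ∈ D, Nat.gcd (z 0).val (m 0) = d ∧
            ∀ i : Fin r, Nat.gcd (z i.succ).val (m i.succ) = 1} x y =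
      Matrix.kroneckerMap (· * ·)
        (icgAdj (m 0) D)
        (cayAdj {z : ∀ i : Fin r, ZMod (m i.succ) |
            ∀ i : Fin r, Nat.gcd (z i).val (m i.succ) = 1})
        (x 0, Fin.tail x) (y 0, Fin.tail y) :=
  gcdGraph_eq_kronecker_general r m D
end
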